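/- arXiv:1511.08726 — 12 statements merged into one kernel-verified Lean document; each statement's English description precedes it below -/
import Mathlib

section
/- Let M ⊆ L^∞(Ω,F) contain the constants and E : M → ℝ be a pre-expectation. Define Ê(X) := inf{E(X₀) : X₀ ∈ M, X₀ ≥ X} for X ∈ L^∞(Ω,F). Then Ê is a real-valued expectation on L^∞(Ω,F) extending E, and it is the maximal such extension: every expectation Ẽ on L^∞(Ω,F) with Ẽ|_M = E satisfies Ẽ ≤ Ê pointwise. -/
open Filter

/-- Bounded measurable real-valued functions: membership in `L^∞(Ω,F)`. -/
def IsLinfty {Ω : Type*} [MeasurableSpace Ω] (X : Ω → ℝ) : Prop :=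
  Measurable X ∧ ∃ C : ℝ, ∀ ω, |X ω| ≤ C

/-- The maximal extension `Ê(X) = inf { E(X₀) : X₀ ∈ M, X₀ ≥ X }`. -/
noncomputable def Ehat {Ω : Type*} (M : Set (Ω → ℝ)) (E : (Ω → ℝ) → ℝ)
    (X : Ω → ℝ) : ℝ :=
  sInf (E '' {X₀ | X₀ ∈ M ∧ ∀ ω, X ω ≤ X₀ ω})

theorem stmt1 {Ω : Type*} [MeasurableSpace Ω]
    (M : Set (Ω → ℝ)) (hM : ∀ X ∈ M, IsLinfty X)
    (hconst : ∀ c : ℝ, (fun _ : Ω => c) ∈ M)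
    (E : (Ω → ℝ) → ℝ)
    (hmono : ∀ X ∈ M, ∀ Y ∈ M, (∀ ω, X ω ≤ Y ω) → E X ≤ E Y)
    (hcp : ∀ c : ℝ, E (fun _ : Ω => c) = c) :
    -- `Ê` extends `E`
    (∀ X ∈ M, Ehat M E X = E X) ∧
    -- `Ê` is an expectation on `L^∞(Ω,F)`: monotone and constant preserving
    (∀ X Y : Ω → ℝ, IsLinfty X → IsLinfty Y → (∀ ω, X ω ≤ Y ω) →
      Ehat M E X ≤ Ehat M E Y) ∧
    (∀ c : ℝ, Ehat M E (fun _ : Ω => c) = c) ∧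
    -- maximality: any expectation extending `E` is dominated by `Ê`
    (∀ F : (Ω → ℝ) → ℝ,
      (∀ X Y : Ω → ℝ, IsLinfty X → IsLinfty Y → (∀ ω, X ω ≤ Y ω) → F X ≤ F Y) →
      (∀ c : ℝ, F (fun _ : Ω => c) = c) →
      (∀ X ∈ M, F X = E X) →
      ∀ X : Ω → ℝ, IsLinfty X → F X ≤ Ehat M E X) := by
  -- nonemptiness for any Linfty X
  have hne : ∀ X : Ω → ℝ, IsLinfty X →
      (E '' {X₀ | X₀ ∈ M ∧ ∀ ω, X ω ≤ X₀ ω}).Nonempty := by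
    rintro X ⟨-, C, hC⟩
    exact ⟨E (fun _ => C), ⟨(fun _ => C), ⟨hconst C, fun ω => (abs_le.1 (hC ω)).2⟩, rfl⟩⟩
  -- bdd below for any Linfty X
  have hbdd : ∀ X : Ω → ℝ, IsLinfty X →
      BddBelow (E '' {X₀ | X₀ ∈ M ∧ ∀ ω, X ω ≤ X₀ ω}) := by
    rintro X ⟨-, C, hC⟩
    refine ⟨-C, ?_⟩
    rintro y ⟨X₀, ⟨hX₀M, hX₀⟩, rfl⟩
    have : E (fun _ => -C) ≤ E X₀ :=
      hmono _ (hconst _) _ hX₀M (fun ω => ((abs_le.1 (hC ω)).1).trans (hX₀ ω))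
    simpa [hcp] using this
  have hext : ∀ X ∈ M, Ehat M E X = E X := by
    intro X hX
    apply le_antisymm
    · exact csInf_le (hbdd X (hM X hX)) ⟨X, ⟨hX, fun ω => le_rfl⟩, rfl⟩
    · apply le_csInf (hne X (hM X hX))
      rintro y ⟨X₀, ⟨hX₀M, hX₀⟩, rfl⟩
      exact hmono X hX X₀ hX₀M hX₀
  refine ⟨hext, ?_, ?_, ?_⟩
  · intro X Y hX hY hXY
    apply csInf_le_csInf (hbdd X hX) (hne Y hY)
    rintro y ⟨X₀, ⟨hX₀M, hX₀⟩, rfl⟩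
    exact ⟨X₀, ⟨hX₀M, fun ω => (hXY ω).trans (hX₀ ω)⟩, rfl⟩
  · intro c
    rw [hext _ (hconst c), hcp]
  · intro F Fmono Fcp Fext X hX
    apply le_csInf (hne X hX)
    rintro y ⟨X₀, ⟨hX₀M, hX₀⟩, rfl⟩
    rw [← Fext X₀ hX₀M]
    exact Fmono X X₀ hX (hM X₀ hX₀M) hX₀
end

section
/- Let E : M → ℝ be a pre-expectation and define Ě(X) := sup{E(X₀) : X₀ ∈ M, X₀ ≤ X} for X ∈ L^∞(Ω,F). Then Ě is the smallest expectation on L^∞(Ω,F) extending E. -/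
open Filter

/-- `Ě(X) = sup { E(X₀) : X₀ ∈ M, X₀ ≤ X }`. -/
noncomputable def Echeck {Ω : Type*} (M : Set (Ω → ℝ)) (E : (Ω → ℝ) → ℝ)
    (X : Ω → ℝ) : ℝ :=
  sSup (E '' {X₀ | X₀ ∈ M ∧ ∀ ω, X₀ ω ≤ X ω})

theorem stmt3 {Ω : Type*} [MeasurableSpace Ω]
    (M : Set (Ω → ℝ)) (hM : ∀ X ∈ M, IsLinfty X)
    (hconst : ∀ c : ℝ, (fun _ : Ω => c) ∈ M)
    (E : (Ω → ℝ) → ℝ)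
    (hmono : ∀ X ∈ M, ∀ Y ∈ M, (∀ ω, X ω ≤ Y ω) → E X ≤ E Y)
    (hcp : ∀ c : ℝ, E (fun _ : Ω => c) = c) :
    -- `Ě` extends `E`
    (∀ X ∈ M, Echeck M E X = E X) ∧
    -- `Ě` is an expectation on `L^∞(Ω,F)`
    (∀ X Y : Ω → ℝ, IsLinfty X → IsLinfty Y → (∀ ω, X ω ≤ Y ω) →
      Echeck M E X ≤ Echeck M E Y) ∧
    (∀ c : ℝ, Echeck M E (fun _ : Ω => c) = c) ∧
    -- minimality: any expectation extending `E` dominates `Ě`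
    (∀ F : (Ω → ℝ) → ℝ,
      (∀ X Y : Ω → ℝ, IsLinfty X → IsLinfty Y → (∀ ω, X ω ≤ Y ω) → F X ≤ F Y) →
      (∀ c : ℝ, F (fun _ : Ω => c) = c) →
      (∀ X ∈ M, F X = E X) →
      ∀ X : Ω → ℝ, IsLinfty X → Echeck M E X ≤ F X) := by
  -- helper facts
  have hmem : ∀ (X : Ω → ℝ) (X₀ : Ω → ℝ), X₀ ∈ M → (∀ ω, X₀ ω ≤ X ω) →
      E X₀ ∈ E '' {X₀ | X₀ ∈ M ∧ ∀ ω, X₀ ω ≤ X ω} := by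
    intro X X₀ h1 h2
    exact Set.mem_image_of_mem E ⟨h1, h2⟩
  have hub : ∀ (X : Ω → ℝ) (C : ℝ), (∀ ω, X ω ≤ C) →
      ∀ y ∈ E '' {X₀ | X₀ ∈ M ∧ ∀ ω, X₀ ω ≤ X ω}, y ≤ C := by
    intro X C hC y hy
    obtain ⟨X₀, ⟨h1, h2⟩, rfl⟩ := hy
    calc E X₀ ≤ E (fun _ => C) := hmono _ h1 _ (hconst C) (fun ω => (h2 ω).trans (hC ω))
      _ = C := hcp C
  refine ⟨?_, ?_, ?_, ?_⟩
  · intro X hX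
    refine le_antisymm (csSup_le ⟨E X, hmem X X hX (fun _ => le_rfl)⟩ ?_)
      (le_csSup ?_ (hmem X X hX (fun _ => le_rfl)))
    · rintro y ⟨X₀, ⟨h1, h2⟩, rfl⟩
      exact hmono _ h1 _ hX h2
    · exact ⟨E X, fun y hy => by
        obtain ⟨X₀, ⟨h1, h2⟩, rfl⟩ := hy; exact hmono _ h1 _ hX h2⟩
  · intro X Y hX hY hXY
    obtain ⟨CX, hCX⟩ := hX.2
    obtain ⟨CY, hCY⟩ := hY.2
    apply csSup_le ⟨E (fun _ => -CX), hmem X _ (hconst _)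
      (fun ω => neg_le_of_abs_le (hCX ω))⟩
    rintro y ⟨X₀, ⟨h1, h2⟩, rfl⟩
    apply le_csSup ⟨CY, hub Y CY (fun ω => le_of_abs_le (hCY ω))⟩
    exact hmem Y X₀ h1 (fun ω => (h2 ω).trans (hXY ω))
  · intro c
    refine le_antisymm (csSup_le ⟨E (fun _ => c), hmem (fun _ => c) (fun _ => c) (hconst c) (fun _ => le_rfl)⟩
      (fun y hy => ?_)) ?_
    · exact (hub (fun _ => c) c (fun _ => le_rfl) y hy).trans_eq rfl
    · have := le_csSup ⟨c, hub (fun _ => c) c (fun _ => le_rfl)⟩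
        (hmem (fun _ => c) (fun _ => c) (hconst c) (fun _ => le_rfl))
      rwa [hcp c] at this
  · intro F hFmono hFc hFE X hX
    obtain ⟨CX, hCX⟩ := hX.2
    apply csSup_le ⟨E (fun _ => -CX), hmem X _ (hconst _)
      (fun ω => neg_le_of_abs_le (hCX ω))⟩
    rintro y ⟨X₀, ⟨h1, h2⟩, rfl⟩
    rw [← hFE _ h1]
    exact hFmono _ _ (hM _ h1) hX h2
end

section
/- Let M be a linear subspace of L^∞(Ω,F) with 1 ∈ M and E : M → ℝ a convex pre-expectation. Then for every X ∈ M, E(X) = max over continuous linear functionals μ on M of (μX − E*(μ)), and the maximum is attained on the weak* compact convex set {μ ∈ M' : E*(μ) ≤ α} for any α ≥ ‖X‖_∞ − E(X). -/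
/-!
Restricted to `M`, the pre-expectation `E` is a finite convex function on a real vector space, so
it has a linear subgradient `g` at `X`: Hahn–Banach dominates `g` by the sublinear directional
derivative `Z ↦ inf_{t > 0} (E(X + tZ) - E X) / t`. The subgradient inequality says exactly that
`E*(g) = g X - E X`, so the maximum is attained at `g`, while `μX - E*(μ) ≤ E X` holds for every
`μ` by definition of `E*`. Monotonicity makes `g` positive and constant preservation forces
`g 1 = 1`, hence `|g Z| ≤ ‖Z‖_∞`; in particular `g` is continuous and
`E*(g) ≤ ‖X‖_∞ - E X ≤ α`.
-/

open Set

/-- A bounded (= continuous) linear functional on `M` w.r.t. the sup norm,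
i.e. an element of `M'`. -/
def IsBddFunctional {Ω : Type*} (M : Submodule ℝ (Ω → ℝ)) (μ : M →ₗ[ℝ] ℝ) : Prop :=
  ∃ C : ℝ, ∀ X : M, |μ X| ≤ C * ⨆ ω, |(X : Ω → ℝ) ω|

/-- The convex conjugate `E*(μ) = sup_{X ∈ M} (μX − E(X))`, with values in `EReal`. -/
noncomputable def conjE {Ω : Type*} (M : Submodule ℝ (Ω → ℝ))
    (E : (Ω → ℝ) → ℝ) (μ : M →ₗ[ℝ] ℝ) : EReal :=
  ⨆ X : M, ((μ X - E (X : Ω → ℝ) : ℝ) : EReal)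

section Subgradient

variable {V : Type*} [AddCommGroup V] [Module ℝ V] {f : V → ℝ}

noncomputable def raySlope (f : V → ℝ) (x : V) (t : ℝ) : ℝ :=
  (f (t • x) - f 0) / t

noncomputable def dirDerivAtZero (f : V → ℝ) (x : V) : ℝ :=
  ⨅ t : Ioi (0 : ℝ), raySlope f x t

theorem ConvexOn.raySlope_mono (hf : ConvexOn ℝ univ f) (x : V) {s t : ℝ} (hs : 0 < s)
    (hst : s ≤ t) : raySlope f x s ≤ raySlope f x t := by
  have h := (hf.comp_linearMap (LinearMap.toSpanSingleton ℝ V x)).secant_mono (a := 0)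
    trivial trivial trivial hs.ne' (hs.trans_le hst).ne' hst
  simpa [raySlope] using h

theorem ConvexOn.sub_neg_le_raySlope (hf : ConvexOn ℝ univ f) (x : V) {t : ℝ} (ht : 0 < t) :
    f 0 - f (-x) ≤ raySlope f x t := by
  have h := (hf.comp_linearMap (LinearMap.toSpanSingleton ℝ V x)).secant_mono (a := 0)
    (x := -1) trivial trivial trivial (by norm_num) ht.ne' (by linarith)
  simpa [raySlope, neg_div, div_neg] using h

theorem ConvexOn.dirDerivAtZero_le (hf : ConvexOn ℝ univ f) (x : V) {t : ℝ} (ht : 0 < t) :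
    dirDerivAtZero f x ≤ raySlope f x t :=
  ciInf_le (f := fun s : Ioi (0 : ℝ) => raySlope f x s)
    ⟨f 0 - f (-x), by rintro _ ⟨s, rfl⟩; exact hf.sub_neg_le_raySlope x s.2⟩ ⟨t, ht⟩

theorem le_dirDerivAtZero {x : V} {a : ℝ} (h : ∀ t, 0 < t → a ≤ raySlope f x t) :
    a ≤ dirDerivAtZero f x :=
  le_ciInf fun t => h t t.2

theorem ConvexOn.dirDerivAtZero_smul_le (hf : ConvexOn ℝ univ f) {c : ℝ} (hc : 0 < c) (x : V) :
    dirDerivAtZero f (c • x) ≤ c * dirDerivAtZero f x := by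
  rw [← div_le_iff₀' hc]
  refine le_dirDerivAtZero fun t ht => ?_
  rw [div_le_iff₀' hc]
  calc dirDerivAtZero f (c • x) ≤ raySlope f (c • x) (t / c) :=
        hf.dirDerivAtZero_le _ (by positivity)
    _ = c * raySlope f x t := by
      rw [raySlope, raySlope, smul_smul, div_mul_cancel₀ _ hc.ne']
      field_simp

theorem ConvexOn.dirDerivAtZero_smul (hf : ConvexOn ℝ univ f) {c : ℝ} (hc : 0 < c) (x : V) :
    dirDerivAtZero f (c • x) = c * dirDerivAtZero f x := by
  refine le_antisymm (hf.dirDerivAtZero_smul_le hc x) ?_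
  have h := hf.dirDerivAtZero_smul_le (inv_pos.2 hc) (c • x)
  rw [inv_smul_smul₀ hc.ne'] at h
  calc c * dirDerivAtZero f x ≤ c * (c⁻¹ * dirDerivAtZero f (c • x)) := by gcongr
    _ = dirDerivAtZero f (c • x) := mul_inv_cancel_left₀ hc.ne' _

theorem ConvexOn.raySlope_add_le (hf : ConvexOn ℝ univ f) (x y : V) {t : ℝ} (ht : 0 < t) :
    raySlope f (x + y) t ≤ raySlope f x (2 * t) + raySlope f y (2 * t) := by
  have h := hf.2 (mem_univ ((2 * t) • x)) (mem_univ ((2 * t) • y))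
    (by norm_num : (0 : ℝ) ≤ 1 / 2) (by norm_num : (0 : ℝ) ≤ 1 / 2)
    (by norm_num : (1 / 2 : ℝ) + 1 / 2 = 1)
  have hmid : (1 / 2 : ℝ) • (2 * t) • x + (1 / 2 : ℝ) • (2 * t) • y = t • (x + y) := by module
  rw [hmid, smul_eq_mul, smul_eq_mul] at h
  simp only [raySlope]
  rw [← add_div, div_le_div_iff₀ ht (by positivity)]
  nlinarith

theorem ConvexOn.dirDerivAtZero_add_le (hf : ConvexOn ℝ univ f) (x y : V) :
    dirDerivAtZero f (x + y) ≤ dirDerivAtZero f x + dirDerivAtZero f y := by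
  have key : ∀ s, 0 < s → ∀ u, 0 < u →
      dirDerivAtZero f (x + y) ≤ raySlope f x s + raySlope f y u := by
    intro s hs u hu
    have hr : 0 < min s u / 2 := by positivity
    calc dirDerivAtZero f (x + y) ≤ raySlope f (x + y) (min s u / 2) :=
          hf.dirDerivAtZero_le _ hr
      _ ≤ raySlope f x (min s u) + raySlope f y (min s u) := by
        simpa [mul_div_cancel₀] using hf.raySlope_add_le x y hr
      _ ≤ raySlope f x s + raySlope f y u := by
        gcongr
        · exact hf.raySlope_mono x (lt_min hs hu) (min_le_left s u)
        · exact hf.raySlope_mono y (lt_min hs hu) (min_le_right s u)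
  have hx : dirDerivAtZero f (x + y) - dirDerivAtZero f y ≤ dirDerivAtZero f x :=
    le_dirDerivAtZero fun s hs => sub_le_comm.1 <| le_dirDerivAtZero fun u hu =>
      sub_le_comm.1 (by linarith [key s hs u hu])
  linarith

theorem ConvexOn.exists_linearMap_le_sub (hf : ConvexOn ℝ univ f) :
    ∃ g : V →ₗ[ℝ] ℝ, ∀ x, g x ≤ f x - f 0 := by
  obtain ⟨g, -, hg⟩ := exists_extension_of_le_sublinear ⊥ (dirDerivAtZero f)
    (fun _ hc x => hf.dirDerivAtZero_smul hc x) hf.dirDerivAtZero_add_le (by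
      rintro ⟨x, hx⟩
      obtain rfl := (Submodule.mem_bot ℝ).1 hx
      simp only [dirDerivAtZero, raySlope, smul_zero, sub_self, zero_div, ciInf_const]
      exact (map_zero (⊥ : V →ₗ.[ℝ] ℝ).toFun).le)
  exact ⟨g, fun x => (hg x).trans (by simpa [raySlope] using hf.dirDerivAtZero_le x one_pos)⟩

theorem ConvexOn.exists_linearMap_subgradient (hf : ConvexOn ℝ univ f) (a : V) :
    ∃ g : V →ₗ[ℝ] ℝ, ∀ x, f a + g (x - a) ≤ f x := by
  obtain ⟨g, hg⟩ := (by simpa [Function.comp_def] using hf.translate_right a :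
    ConvexOn ℝ univ fun z => f (a + z)).exists_linearMap_le_sub
  refine ⟨g, fun x => ?_⟩
  have h := hg (x - a)
  simp only [add_sub_cancel, add_zero] at h
  linarith

end Subgradient

theorem IsLinfty.bddAbove_abs {Ω : Type*} [MeasurableSpace Ω] {X : Ω → ℝ} (hX : IsLinfty X) :
    BddAbove (range fun ω => |X ω|) := by
  obtain ⟨-, C, hC⟩ := hX
  exact ⟨C, by rintro _ ⟨ω, rfl⟩; exact hC ω⟩

section Conjugate

variable {Ω : Type*} {M : Submodule ℝ (Ω → ℝ)} {E : (Ω → ℝ) → ℝ}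

theorem convexOn_comp_subtype_val
    (hconvex : ∀ X ∈ M, ∀ Y ∈ M, ∀ t ∈ Icc (0:ℝ) 1,
      E (fun ω => t * X ω + (1 - t) * Y ω) ≤ t * E X + (1 - t) * E Y) :
    ConvexOn ℝ univ fun Y : M => E Y := by
  refine ⟨convex_univ, fun Y _ Z _ a b ha hb hab => ?_⟩
  obtain rfl : b = 1 - a := by linarith
  have hcoe : ((a • Y + (1 - a) • Z : M) : Ω → ℝ) =
      fun ω => a * (Y : Ω → ℝ) ω + (1 - a) * (Z : Ω → ℝ) ω := by
    ext ω
    simp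
  simpa only [smul_eq_mul, hcoe] using hconvex Y Y.2 Z Z.2 a ⟨ha, by linarith⟩

theorem conjE_le_coe_iff (μ : M →ₗ[ℝ] ℝ) (a : ℝ) :
    conjE M E μ ≤ a ↔ ∀ Y : M, μ Y - E Y ≤ a := by
  simp only [conjE, iSup_le_iff, EReal.coe_le_coe_iff]

theorem coe_sub_le_conjE (μ : M →ₗ[ℝ] ℝ) (Y : M) : ((μ Y - E Y : ℝ) : EReal) ≤ conjE M E μ :=
  le_iSup (fun Y : M => ((μ Y - E Y : ℝ) : EReal)) Y

theorem coe_sub_conjE_le (μ : M →ₗ[ℝ] ℝ) (X : M) : (μ X : EReal) - conjE M E μ ≤ E X := by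
  refine EReal.sub_le_of_le_add ?_
  calc (μ X : EReal) = E X + ((μ X - E X : ℝ) : EReal) := by rw [← EReal.coe_add]; ring_nf
    _ ≤ E X + conjE M E μ := add_le_add_right (coe_sub_le_conjE μ X) _

theorem conjE_eq_of_subgradient {X : M} {g : M →ₗ[ℝ] ℝ} (hg : ∀ Y : M, E X + g (Y - X) ≤ E Y) :
    conjE M E g = ((g X - E X : ℝ) : EReal) := by
  refine le_antisymm ((conjE_le_coe_iff g _).2 fun Y => ?_) (coe_sub_le_conjE g X)
  linarith [hg Y, map_sub g Y X]

theorem convex_setOf_conjE_le (a : ℝ) : Convex ℝ {μ : M →ₗ[ℝ] ℝ | conjE M E μ ≤ a} := by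
  have h : {μ : M →ₗ[ℝ] ℝ | conjE M E μ ≤ a} = ⋂ Y : M, {μ | μ Y ≤ a + E Y} := by
    ext μ
    simp only [mem_ofPred_eq, conjE_le_coe_iff, sub_le_iff_le_add, mem_iInter]
  rw [h]
  exact convex_iInter fun Y => convex_halfSpace_le ⟨fun _ _ => rfl, fun _ _ => rfl⟩ _

end Conjugate

section PositiveFunctional

variable {Ω : Type*} {M : Submodule ℝ (Ω → ℝ)} (hone : (fun _ : Ω => (1:ℝ)) ∈ M)
  {g : M →ₗ[ℝ] ℝ}

theorem le_iSup_abs_of_nonpos_of_apply_one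
    (hg_nonpos : ∀ W : M, (∀ ω, (W : Ω → ℝ) ω ≤ 0) → g W ≤ 0) (hg_one : g ⟨_, hone⟩ = 1)
    (Z : M) (hZ : BddAbove (range fun ω => |(Z : Ω → ℝ) ω|)) :
    g Z ≤ ⨆ ω, |(Z : Ω → ℝ) ω| := by
  have h := hg_nonpos (Z - (⨆ ω, |(Z : Ω → ℝ) ω|) • ⟨_, hone⟩) fun ω => by
    simpa using (le_abs_self _).trans (le_ciSup hZ ω)
  rwa [map_sub, map_smul, hg_one, smul_eq_mul, mul_one, sub_nonpos] at h

theorem isBddFunctional_of_nonpos_of_apply_one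
    (hM : ∀ Z : M, BddAbove (range fun ω => |(Z : Ω → ℝ) ω|))
    (hg_nonpos : ∀ W : M, (∀ ω, (W : Ω → ℝ) ω ≤ 0) → g W ≤ 0) (hg_one : g ⟨_, hone⟩ = 1) :
    IsBddFunctional M g := by
  refine ⟨1, fun Z => ?_⟩
  have hneg := le_iSup_abs_of_nonpos_of_apply_one hone hg_nonpos hg_one (-Z) (hM (-Z))
  simp only [map_neg, Submodule.coe_neg, Pi.neg_apply, abs_neg] at hneg
  rw [one_mul, abs_le]
  exact ⟨by linarith, le_iSup_abs_of_nonpos_of_apply_one hone hg_nonpos hg_one Z (hM Z)⟩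

end PositiveFunctional

section PreExpectation

variable {Ω : Type*} {M : Submodule ℝ (Ω → ℝ)} {E : (Ω → ℝ) → ℝ} {X : M} {g : M →ₗ[ℝ] ℝ}

theorem subgradient_nonpos_of_nonpos
    (hmono : ∀ X ∈ M, ∀ Y ∈ M, (∀ ω, X ω ≤ Y ω) → E X ≤ E Y)
    (hg : ∀ Y : M, E X + g (Y - X) ≤ E Y) (W : M) (hW : ∀ ω, (W : Ω → ℝ) ω ≤ 0) : g W ≤ 0 := by
  have h := hg (X + W)
  rw [add_sub_cancel_left] at h
  have hle : E ((X + W : M) : Ω → ℝ) ≤ E X :=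
    hmono _ (X + W).2 _ X.2 fun ω => by simpa using hW ω
  linarith

theorem subgradient_apply_one (hone : (fun _ : Ω => (1:ℝ)) ∈ M)
    (hcp : ∀ c : ℝ, E (fun _ : Ω => c) = c) (hg : ∀ Y : M, E X + g (Y - X) ≤ E Y) :
    g ⟨_, hone⟩ = 1 := by
  have h : ∀ c : ℝ, c * (g ⟨_, hone⟩ - 1) ≤ g X - E X := fun c => by
    have hc := hg (c • ⟨_, hone⟩)
    have hcoe : ((c • ⟨_, hone⟩ : M) : Ω → ℝ) = fun _ => c := by
      ext
      simp
    rw [hcoe, hcp, map_sub, map_smul, smul_eq_mul] at hc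
    linarith
  by_contra hne
  have hc := h ((g X - E X + 1) / (g ⟨_, hone⟩ - 1))
  rw [div_mul_cancel₀ _ (sub_ne_zero.2 hne)] at hc
  linarith

end PreExpectation

theorem stmt5 {Ω : Type*} [MeasurableSpace Ω]
    (M : Submodule ℝ (Ω → ℝ)) (hM : ∀ X ∈ M, IsLinfty X)
    (hone : (fun _ : Ω => (1:ℝ)) ∈ M)
    (E : (Ω → ℝ) → ℝ)
    (hmono : ∀ X ∈ M, ∀ Y ∈ M, (∀ ω, X ω ≤ Y ω) → E X ≤ E Y)
    (hcp : ∀ c : ℝ, E (fun _ : Ω => c) = c)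
    (hconvex : ∀ X ∈ M, ∀ Y ∈ M, ∀ t ∈ Icc (0:ℝ) 1,
      E (fun ω => t * X ω + (1 - t) * Y ω) ≤ t * E X + (1 - t) * E Y) :
    ∀ X : M, ∀ α : ℝ, (⨆ ω, |(X : Ω → ℝ) ω|) - E (X : Ω → ℝ) ≤ α →
      -- the set `{μ ∈ M' : E*(μ) ≤ α}` is convex ...
      Convex ℝ {μ : M →ₗ[ℝ] ℝ | conjE M E μ ≤ (α : EReal)} ∧
      -- ... and the maximum is attained on it
      (∃ μ : M →ₗ[ℝ] ℝ, IsBddFunctional M μ ∧ conjE M E μ ≤ (α : EReal) ∧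
        ((E (X : Ω → ℝ) : ℝ) : EReal) = ((μ X : ℝ) : EReal) - conjE M E μ) ∧
      -- and `E(X) = max_{μ ∈ M'} (μX − E*(μ))`
      (∀ ν : M →ₗ[ℝ] ℝ, IsBddFunctional M ν →
        ((ν X : ℝ) : EReal) - conjE M E ν ≤ ((E (X : Ω → ℝ) : ℝ) : EReal)) := by
  intro X α hα
  obtain ⟨g, hg⟩ := (convexOn_comp_subtype_val hconvex).exists_linearMap_subgradient X
  have hbdd : ∀ Z : M, BddAbove (range fun ω => |(Z : Ω → ℝ) ω|) :=
    fun Z => (hM Z Z.2).bddAbove_abs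
  have hg_nonpos := subgradient_nonpos_of_nonpos hmono hg
  have hg_one := subgradient_apply_one hone hcp hg
  refine ⟨convex_setOf_conjE_le α,
    ⟨g, isBddFunctional_of_nonpos_of_apply_one hone hbdd hg_nonpos hg_one, ?_, ?_⟩,
    fun ν _ => coe_sub_conjE_le ν X⟩
  · rw [conjE_eq_of_subgradient hg, EReal.coe_le_coe_iff]
    linarith [le_iSup_abs_of_nonpos_of_apply_one hone hg_nonpos hg_one X (hbdd X)]
  · rw [conjE_eq_of_subgradient hg, ← EReal.coe_sub, sub_sub_cancel]
end

section
/- Let μ : M → ℝ be a linear pre-expectation on a linear subspace M ∋ 1 of L^∞(Ω,F). Then the maximal extension μ̂(X) = inf{μX₀ : X₀ ∈ M, X₀ ≥ X} satisfies μ̂(X) = max{νX : ν ∈ ba₊¹(Ω,F), ν|_M = μ} for all X ∈ L^∞(Ω,F). -/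
open Set

/-- Elements of `ba₊¹(Ω,F)`, viewed as positive normalized linear functionals on
`L^∞(Ω,F)` (finitely additive probability measures). -/
def IsBa1 {Ω : Type*} [MeasurableSpace Ω] (ν : (Ω → ℝ) →ₗ[ℝ] ℝ) : Prop :=
  (∀ X : Ω → ℝ, IsLinfty X → (∀ ω, 0 ≤ X ω) → 0 ≤ ν X) ∧
  ν (fun _ : Ω => (1:ℝ)) = 1

/-- The maximal extension `μ̂(X) = inf { μ(X₀) : X₀ ∈ M, X₀ ≥ X }` of a linear
pre-expectation `μ` on `M`. -/
noncomputable def muHat {Ω : Type*} (M : Submodule ℝ (Ω → ℝ)) (μ : M →ₗ[ℝ] ℝ)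
    (X : Ω → ℝ) : ℝ :=
  sInf {r : ℝ | ∃ X₀ : M, (∀ ω, X ω ≤ (X₀ : Ω → ℝ) ω) ∧ r = μ X₀}

/-!
If `ν` is positive and extends `μ`, then `ν X ≤ ν X₀ = μ X₀` for every `X₀ ∈ M` above `X`, so
`ν X ≤ μ̂ X`. Conversely, on `M + ℝ X` the functional `Y₀ + c X ↦ μ Y₀ + c μ̂(X)` is positive:
when `Y₀ + c X ≥ 0`, the sign of `c` places `X` above or below an element of `M`, which bounds
`μ̂ X` by monotonicity of `μ`. Since `M` contains the constants it majorizes `L^∞`, so M. Riesz's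
extension theorem extends this functional positively to `L^∞`, and then linearly to all functions.
-/

noncomputable def LinearMap.toPMapOfLE {R V W : Type*} [Ring R] [AddCommGroup V] [Module R V]
    [AddCommGroup W] [Module R W] {p q : Submodule R V} (f : p →ₗ[R] W) (h : p ≤ q) :
    q →ₗ.[R] W :=
  ⟨p.comap q.subtype, f ∘ₗ (Submodule.comapSubtypeEquivOfLe h).toLinearMap⟩

section MaximalExtension

variable {Ω : Type*} {M : Submodule ℝ (Ω → ℝ)} {μ : M →ₗ[ℝ] ℝ}

theorem muHat_mem_Icc (hμ : Monotone μ) {X : Ω → ℝ} {Y₀ X₀ : M} (hY₀ : (Y₀ : Ω → ℝ) ≤ X)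
    (hX₀ : X ≤ X₀) : muHat M μ X ∈ Icc (μ Y₀) (μ X₀) := by
  have hbdd : ∀ r ∈ {r : ℝ | ∃ X₀ : M, (∀ ω, X ω ≤ (X₀ : Ω → ℝ) ω) ∧ r = μ X₀}, μ Y₀ ≤ r := by
    rintro _ ⟨Z, hZ, rfl⟩
    exact hμ (hY₀.trans hZ)
  exact ⟨le_csInf ⟨μ X₀, X₀, hX₀, rfl⟩ hbdd, csInf_le ⟨μ Y₀, hbdd⟩ ⟨X₀, hX₀, rfl⟩⟩

theorem muHat_coe (hμ : Monotone μ) (X₀ : M) : muHat M μ X₀ = μ X₀ :=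
  le_antisymm (muHat_mem_Icc hμ le_rfl le_rfl).2 (muHat_mem_Icc hμ le_rfl le_rfl).1

theorem zero_le_map_add_mul_muHat (hμ : Monotone μ) {X : Ω → ℝ}
    (hlow : ∃ Y₁ : M, (Y₁ : Ω → ℝ) ≤ X) (hup : ∃ X₁ : M, X ≤ X₁) {Y₀ : M} {c : ℝ}
    (h : 0 ≤ (Y₀ : Ω → ℝ) + c • X) :
    0 ≤ μ Y₀ + c * muHat M μ X := by
  obtain ⟨Y₁, hY₁⟩ := hlow
  obtain ⟨X₁, hX₁⟩ := hup
  rcases lt_trichotomy c 0 with hc | rfl | hc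
  · have hX : X ≤ ((-c)⁻¹ • Y₀ : M) := fun ω => by
      have := h ω
      simp only [Pi.zero_apply, Pi.add_apply, Pi.smul_apply, smul_eq_mul] at this
      simp only [Submodule.coe_smul, Pi.smul_apply, smul_eq_mul]
      rw [le_inv_mul_iff₀ (neg_pos.2 hc)]
      linarith
    have := (muHat_mem_Icc hμ hY₁ hX).2
    rw [map_smul, smul_eq_mul, le_inv_mul_iff₀ (neg_pos.2 hc)] at this
    linarith
  · simpa using hμ (show 0 ≤ Y₀ by simpa [← Subtype.coe_le_coe] using h)
  · have hX : ((c⁻¹ • -Y₀ : M) : Ω → ℝ) ≤ X := fun ω => by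
      have := h ω
      simp only [Pi.zero_apply, Pi.add_apply, Pi.smul_apply, smul_eq_mul] at this
      simp only [Submodule.coe_smul, Submodule.coe_neg, Pi.smul_apply, Pi.neg_apply, smul_eq_mul]
      rw [inv_mul_le_iff₀ hc]
      linarith
    have := (muHat_mem_Icc hμ hX hX₁).1
    rw [map_smul, map_neg, smul_eq_mul, inv_mul_le_iff₀ hc] at this
    linarith

theorem exists_nonneg_pmap_extension_eq_muHat (hμ : Monotone μ) {E : Submodule ℝ (Ω → ℝ)}
    (hME : M ≤ E) {X : Ω → ℝ} (hXE : X ∈ E) (hlow : ∃ Y₁ : M, (Y₁ : Ω → ℝ) ≤ X)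
    (hup : ∃ X₁ : M, X ≤ X₁) :
    ∃ f : E →ₗ.[ℝ] ℝ, μ.toPMapOfLE hME ≤ f ∧
      (∃ hX : ⟨X, hXE⟩ ∈ f.domain, f ⟨_, hX⟩ = muHat M μ X) ∧
      ∀ z : f.domain, 0 ≤ ((z : E) : Ω → ℝ) → 0 ≤ f z := by
  by_cases hXM : X ∈ M
  · refine ⟨μ.toPMapOfLE hME, le_rfl, ⟨hXM, (muHat_coe hμ ⟨X, hXM⟩).symm⟩, fun z hz => ?_⟩
    exact (map_zero μ).symm.trans_le (hμ hz)
  · refine ⟨(μ.toPMapOfLE hME).supSpanSingleton ⟨X, hXE⟩ (muHat M μ X) hXM,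
      LinearPMap.left_le_sup _ _ _, ⟨_, LinearPMap.supSpanSingleton_apply_self _ _ hXM⟩, ?_⟩
    rintro ⟨z, hz⟩ hz0
    obtain ⟨y, hy, _, hx, rfl⟩ := Submodule.mem_sup.1 hz
    obtain ⟨c, rfl⟩ := Submodule.mem_span_singleton.1 hx
    rw [LinearPMap.supSpanSingleton_apply_mk _ _ _ hXM _ hy]
    exact zero_le_map_add_mul_muHat hμ hlow hup (Y₀ := ⟨y, hy⟩) hz0

theorem exists_nonneg_extension_eq_muHat (hμ : Monotone μ) {E : Submodule ℝ (Ω → ℝ)}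
    (hME : M ≤ E) (hE : ∀ Y ∈ E, ∃ Y₀ : M, Y ≤ Y₀) {X : Ω → ℝ} (hXE : X ∈ E) :
    ∃ ν : (Ω → ℝ) →ₗ[ℝ] ℝ, (∀ Y₀ : M, ν Y₀ = μ Y₀) ∧ (∀ Y ∈ E, 0 ≤ Y → 0 ≤ ν Y) ∧
      ν X = muHat M μ X := by
  have hlow : ∃ Y₁ : M, (Y₁ : Ω → ℝ) ≤ X := by
    obtain ⟨Y₀, hY₀⟩ := hE (-X) (E.neg_mem hXE)
    exact ⟨-Y₀, neg_le.1 hY₀⟩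
  obtain ⟨f, hμf, ⟨hXf, hfX⟩, hf⟩ :=
    exists_nonneg_pmap_extension_eq_muHat hμ hME hXE hlow (hE X hXE)
  have hdense : ∀ y : E, ∃ x : f.domain, (x : E) + y ∈
      (PointedCone.positive ℝ (Ω → ℝ)).comap E.subtype := by
    intro y
    obtain ⟨Y₀, hY₀⟩ := hE (-y) (E.neg_mem y.2)
    refine ⟨⟨⟨Y₀, hME Y₀.2⟩, hμf.1 Y₀.2⟩, ?_⟩
    simpa [neg_le_iff_add_nonneg] using hY₀
  obtain ⟨g, hgf, hg⟩ := riesz_extension _ f hf hdense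
  obtain ⟨ν, hν⟩ := LinearMap.exists_extend g
  have hνg (Y : E) : ν Y = g Y := LinearMap.congr_fun hν Y
  refine ⟨ν, fun Y₀ => ?_, fun Y hY hY0 => hνg ⟨Y, hY⟩ ▸ hg _ hY0, ?_⟩
  · rw [hνg ⟨Y₀, hME Y₀.2⟩, hgf ⟨_, hμf.1 Y₀.2⟩]
    exact (hμf.2 (x := ⟨_, Y₀.2⟩) rfl).symm
  · rw [hνg ⟨X, hXE⟩, hgf ⟨_, hXf⟩, hfX]

theorem map_le_muHat {E : Submodule ℝ (Ω → ℝ)} (hME : M ≤ E) {ν : (Ω → ℝ) →ₗ[ℝ] ℝ}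
    (hν : ∀ Y ∈ E, 0 ≤ Y → 0 ≤ ν Y) (hνμ : ∀ Y₀ : M, ν Y₀ = μ Y₀) {X : Ω → ℝ} (hXE : X ∈ E)
    (hup : ∃ X₁ : M, X ≤ X₁) : ν X ≤ muHat M μ X := by
  obtain ⟨X₁, hX₁⟩ := hup
  refine le_csInf ⟨μ X₁, X₁, hX₁, rfl⟩ ?_
  rintro _ ⟨X₀, hX₀, rfl⟩
  have := hν _ (E.sub_mem (hME X₀.2) hXE) (sub_nonneg.2 hX₀)
  rw [map_sub, hνμ] at this
  linarith

end MaximalExtension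

def linftySubmodule (Ω : Type*) [MeasurableSpace Ω] : Submodule ℝ (Ω → ℝ) where
  carrier := {X | IsLinfty X}
  add_mem' := by
    rintro X Y ⟨hXm, CX, hCX⟩ ⟨hYm, CY, hCY⟩
    exact ⟨hXm.add hYm, CX + CY, fun ω => (abs_add_le _ _).trans (add_le_add (hCX ω) (hCY ω))⟩
  zero_mem' := ⟨measurable_const, 0, fun ω => by simp⟩
  smul_mem' := by
    rintro c X ⟨hXm, CX, hCX⟩
    refine ⟨hXm.const_mul c, |c| * CX, fun ω => ?_⟩
    simp only [Pi.smul_apply, smul_eq_mul, abs_mul]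
    exact mul_le_mul_of_nonneg_left (hCX ω) (abs_nonneg c)

theorem stmt8 {Ω : Type*} [MeasurableSpace Ω]
    (M : Submodule ℝ (Ω → ℝ)) (hM : ∀ X ∈ M, IsLinfty X)
    (hone : (fun _ : Ω => (1:ℝ)) ∈ M)
    (μ : M →ₗ[ℝ] ℝ)
    (hmono : ∀ X Y : M, (∀ ω, (X : Ω → ℝ) ω ≤ (Y : Ω → ℝ) ω) → μ X ≤ μ Y)
    (hnorm : μ ⟨fun _ : Ω => (1:ℝ), hone⟩ = 1) :
    ∀ X : Ω → ℝ, IsLinfty X →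
      -- the max in `μ̂(X) = max { νX : ν ∈ ba₊¹, ν|_M = μ }` is attained ...
      (∃ ν : (Ω → ℝ) →ₗ[ℝ] ℝ, IsBa1 ν ∧ (∀ Y : M, ν (Y : Ω → ℝ) = μ Y) ∧
        ν X = muHat M μ X) ∧
      -- ... and every such `ν` is dominated by `μ̂`
      (∀ ν : (Ω → ℝ) →ₗ[ℝ] ℝ, IsBa1 ν → (∀ Y : M, ν (Y : Ω → ℝ) = μ Y) →
        ν X ≤ muHat M μ X) := by
  intro X hX
  have hME : M ≤ linftySubmodule Ω := hM
  have hmaj : ∀ Y ∈ linftySubmodule Ω, ∃ Y₀ : M, Y ≤ Y₀ := fun Y ⟨_, C, hC⟩ =>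
    ⟨C • ⟨_, hone⟩, fun ω => by simpa using (le_abs_self _).trans (hC ω)⟩
  obtain ⟨ν, hνμ, hν, hνX⟩ := exists_nonneg_extension_eq_muHat hmono hME hmaj hX
  refine ⟨⟨ν, ⟨hν, ?_⟩, hνμ, hνX⟩, fun ν' hν' hν'μ =>
    map_le_muHat hME hν'.1 hν'μ hX (hmaj X hX)⟩
  rw [hνμ ⟨_, hone⟩, hnorm]
end

section
/- Let E : M → ℝ be a convex pre-expectation on a linear subspace M ∋ 1 of L^∞(Ω,F). Then E is continuous from above (E(Xₙ) ↓ E(X) whenever Xₙ ↓ X pointwise in M) if and only if every linear functional μ ∈ M' with E*(μ) < ∞ is continuous from above. -/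
/-!
If `μ` has finite penalty `E*(μ)`, then `μ` is positive, and for `Xₙ ↓ X` and every `r > 0` the
bound `r μ(Xₙ - X) ≤ E(r (Xₙ - X)) + E*(μ)` passes to the limit as `r lim μ(Xₙ - X) ≤ E(0) + E*(μ)`,
forcing `μ(Xₙ) → μ(X)`.

Conversely, a convex function on a real vector space has an algebraic subgradient at every point
(Hahn–Banach, dominated by the directional derivative). Subgradients `μₙ` of `E` at `Xₙ` are
positive with `μₙ(1) = 1`, so their penalties are at most `sup X₀ - E(X)`. By Tychonoff they
converge pointwise along an ultrafilter to some `μ` with the same penalty bound, which is therefore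
continuous from above. Letting first `n → ∞` along the ultrafilter and then `m → ∞` in
`E(Xₙ) ≤ μₙ(Xₘ) - μₙ(X) + E(X)` (`m ≤ n`) gives `lim E(Xₙ) ≤ E(X)`.
-/

open Set Filter

open Topology

theorem le_of_hasDerivWithinAt_Ioi_of_le {f g : ℝ → ℝ} {f' g' x : ℝ}
    (hf : HasDerivWithinAt f f' (Ioi x) x) (hg : HasDerivWithinAt g g' (Ioi x) x)
    (hx : f x = g x) (hle : ∀ t > x, f t ≤ g t) : f' ≤ g' := by
  rw [hasDerivWithinAt_iff_tendsto_slope' self_notMem_Ioi] at hf hg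
  refine le_of_tendsto_of_tendsto hf hg (eventually_nhdsWithin_of_forall fun t ht => ?_)
  simp only [slope_def_field, hx]
  exact div_le_div_of_nonneg_right (by linarith [hle t ht]) (sub_pos.2 ht).le

section Subgradient

variable {V : Type*} [AddCommGroup V] [Module ℝ V] {F : V → ℝ}

noncomputable def rightDirDeriv (F : V → ℝ) (a v : V) : ℝ :=
  derivWithin (fun t : ℝ => F (a + t • v)) (Ioi 0) 0

theorem rightDirDeriv_zero (F : V → ℝ) (a : V) : rightDirDeriv F a 0 = 0 := by
  simp [rightDirDeriv]

namespace ConvexOn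

theorem comp_line (hF : ConvexOn ℝ univ F) (a v : V) :
    ConvexOn ℝ univ fun t : ℝ => F (a + t • v) := by
  refine ⟨convex_univ, fun x _ y _ α β hα hβ hαβ => ?_⟩
  have h := hF.2 (mem_univ (a + x • v)) (mem_univ (a + y • v)) hα hβ hαβ
  convert h using 2
  linear_combination (norm := module) -hαβ • a

theorem hasDerivWithinAt_rightDirDeriv (hF : ConvexOn ℝ univ F) (a v : V) :
    HasDerivWithinAt (fun t : ℝ => F (a + t • v)) (rightDirDeriv F a v) (Ioi 0) 0 :=
  (hF.comp_line a v).hasDerivWithinAt_rightDeriv_of_mem_interior (by simp)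

theorem rightDirDeriv_le (hF : ConvexOn ℝ univ F) (a v : V) :
    rightDirDeriv F a v ≤ F (a + v) - F a := by
  simpa [rightDirDeriv, slope_def_field] using
    (hF.comp_line a v).rightDeriv_le_slope_of_mem_interior (x := 0) (y := 1) (by simp)
      (mem_univ _) one_pos

theorem rightDirDeriv_smul (hF : ConvexOn ℝ univ F) (a : V) {c : ℝ} (hc : 0 < c) (v : V) :
    rightDirDeriv F a (c • v) = c * rightDirDeriv F a v := by
  have h := (hF.hasDerivWithinAt_rightDirDeriv a v).comp_of_eq 0
    ((hasDerivAt_id 0).const_mul c).hasDerivWithinAt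
    (show MapsTo (c * ·) (Ioi 0) (Ioi 0) from fun t ht => mul_pos hc ht)
    (by simp)
  simp only [Function.comp_def, id, mul_one] at h
  have e : (fun t : ℝ => F (a + t • c • v)) = fun t => F (a + (c * t) • v) := by
    ext t; rw [smul_smul, mul_comm]
  rw [rightDirDeriv, e, h.derivWithin (uniqueDiffWithinAt_Ioi 0), mul_comm]

theorem rightDirDeriv_add_le (hF : ConvexOn ℝ univ F) (a : V) (v w : V) :
    rightDirDeriv F a (v + w) ≤ rightDirDeriv F a v + rightDirDeriv F a w := by
  have hsplit : ∀ t : ℝ, F (a + t • (v + w)) ≤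
      2⁻¹ * F (a + t • (2 : ℝ) • v) + 2⁻¹ * F (a + t • (2 : ℝ) • w) := fun t => by
    have h : F ((2 : ℝ)⁻¹ • (a + t • (2 : ℝ) • v) + (2 : ℝ)⁻¹ • (a + t • (2 : ℝ) • w)) ≤
        2⁻¹ * F (a + t • (2 : ℝ) • v) + 2⁻¹ * F (a + t • (2 : ℝ) • w) :=
      hF.2 (mem_univ _) (mem_univ _) (by norm_num) (by norm_num) (by norm_num)
    convert h using 2
    module
  have h := le_of_hasDerivWithinAt_Ioi_of_le (hF.hasDerivWithinAt_rightDirDeriv a (v + w))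
    (((hF.hasDerivWithinAt_rightDirDeriv a ((2 : ℝ) • v)).const_mul 2⁻¹).add
      ((hF.hasDerivWithinAt_rightDirDeriv a ((2 : ℝ) • w)).const_mul 2⁻¹))
    (by simp; ring) (fun t _ => hsplit t)
  rw [hF.rightDirDeriv_smul a two_pos, hF.rightDirDeriv_smul a two_pos] at h
  linarith

theorem exists_subgradient (hF : ConvexOn ℝ univ F) (a : V) :
    ∃ μ : V →ₗ[ℝ] ℝ, ∀ y, μ y - F y ≤ μ a - F a := by
  obtain ⟨μ, -, hμ⟩ := exists_extension_of_le_sublinear (LinearMap.toPMap 0 ⊥)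
    (rightDirDeriv F a) (fun c hc v => hF.rightDirDeriv_smul a hc v)
    (hF.rightDirDeriv_add_le a) (by
      rintro ⟨x, hx⟩
      obtain rfl : x = 0 := by simpa using hx
      simp [rightDirDeriv_zero F a])
  refine ⟨μ, fun y => ?_⟩
  have h := (hμ (y - a)).trans (hF.rightDirDeriv_le a (y - a))
  rw [map_sub, add_sub_cancel] at h
  linarith

end ConvexOn

end Subgradient

theorem nonpos_of_forall_pos_mul_le {x b : ℝ} (h : ∀ r > 0, r * x ≤ b) : x ≤ 0 := by
  by_contra! hx
  have := h ((|b| + 1) / x) (by positivity)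
  rw [div_mul_cancel₀ _ hx.ne'] at this
  linarith [le_abs_self b]

theorem eq_zero_of_forall_mul_le {x b : ℝ} (h : ∀ r, r * x ≤ b) : x = 0 :=
  le_antisymm (nonpos_of_forall_pos_mul_le fun r _ => h r)
    (neg_nonpos.1 (nonpos_of_forall_pos_mul_le fun r _ => by simpa using h (-r)))

section Penalty

variable {V : Type*} [AddCommGroup V] [Module ℝ V] {F : V → ℝ} {μ : V →ₗ[ℝ] ℝ} {c : ℝ}

theorem LinearMap.apply_eq_one_of_sub_le {u : V} (hu : ∀ r : ℝ, F (r • u) = r)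
    (hμ : ∀ y, μ y - F y ≤ c) : μ u = 1 := by
  have h := eq_zero_of_forall_mul_le (x := μ u - 1) (b := c) fun r => by
    have := hμ (r • u)
    rw [map_smul, hu, smul_eq_mul] at this
    linarith
  linarith

theorem LinearMap.monotone_of_sub_le [PartialOrder V] [IsOrderedAddMonoid V] [PosSMulMono ℝ V]
    (hF : Monotone F) (hμ : ∀ y, μ y - F y ≤ c) : Monotone μ := by
  intro y z hyz
  have hzy : 0 ≤ z - y := sub_nonneg.2 hyz
  have h := nonpos_of_forall_pos_mul_le (x := -μ (z - y)) (b := c + F 0) fun r hr => by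
    have h1 := hμ (-(r • (z - y)))
    have h2 : F (-(r • (z - y))) ≤ F 0 := hF (neg_nonpos.2 (smul_nonneg hr.le hzy))
    rw [map_neg, map_smul, smul_eq_mul] at h1
    linarith
  rw [map_sub] at h
  linarith

theorem LinearMap.exists_tendsto_ultrafilter_of_sub_le {ι : Type*} (μs : ι → V →ₗ[ℝ] ℝ)
    (hμs : ∀ i y, μs i y - F y ≤ c) (U : Ultrafilter ι) :
    ∃ μ : V →ₗ[ℝ] ℝ, (∀ y, μ y - F y ≤ c) ∧ ∀ y, Tendsto (fun i => μs i y) U (𝓝 (μ y)) := by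
  set K : Set (V → ℝ) := univ.pi fun y => Icc (-(F (-y) + c)) (F y + c)
  have hμsK : ∀ i, ⇑(μs i) ∈ K := fun i y _ => by
    have := hμs i (-y)
    rw [map_neg] at this
    exact ⟨by linarith, by linarith [hμs i y]⟩
  have hK : IsCompact K := isCompact_univ_pi fun _ => isCompact_Icc
  obtain ⟨f, hfK, hf⟩ := hK.ultrafilter_le_nhds (U.map fun i => ⇑(μs i))
    (by rw [Ultrafilter.coe_map, le_principal_iff, mem_map]; exact univ_mem' hμsK)
  have hlim : Tendsto (fun i => ⇑(μs i)) U (𝓝 f) := hf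
  exact ⟨linearMapOfTendsto f μs hlim,
    fun y => show f y - F y ≤ c by linarith [(hfK y trivial).2], tendsto_pi_nhds.1 hlim⟩

end Penalty

section ContinuityFromAbove

variable {V : Type*} [AddCommGroup V] [Module ℝ V] [PartialOrder V] [IsOrderedAddMonoid V]
  [PosSMulMono ℝ V] {F : V → ℝ}

theorem ConvexOn.tendsto_of_antitone (hF : ConvexOn ℝ univ F) (hmono : Monotone F) {u : V}
    (hu : ∀ r : ℝ, F (r • u) = r) {xs : ℕ → V} {x : V} {C : ℝ} (hxs : Antitone xs)
    (hx : ∀ n, x ≤ xs n) (hC : xs 0 ≤ C • u)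
    (hμ : ∀ μ : V →ₗ[ℝ] ℝ, (∀ y, μ y - F y ≤ C - F x) →
      Tendsto (fun n => μ (xs n)) atTop (𝓝 (μ x))) :
    Tendsto (fun n => F (xs n)) atTop (𝓝 (F x)) := by
  choose μs hμs using fun n => hF.exists_subgradient (xs n)
  have hmon : ∀ n, Monotone (μs n) := fun n => LinearMap.monotone_of_sub_le hmono (hμs n)
  have hpen : ∀ n y, μs n y - F y ≤ C - F x := fun n y => by
    have h := hmon n ((hxs (Nat.zero_le n)).trans hC)
    rw [map_smul, (μs n).apply_eq_one_of_sub_le hu (hμs n), smul_eq_mul, mul_one] at h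
    linarith [hμs n y, hmono (hx n)]
  obtain ⟨U, hU⟩ := exists_ultrafilter_le (atTop : Filter ℕ)
  obtain ⟨μ, hμc, hlim⟩ := LinearMap.exists_tendsto_ultrafilter_of_sub_le μs hpen U
  have hbdd : BddBelow (range fun n => F (xs n)) := ⟨F x, by rintro _ ⟨n, rfl⟩; exact hmono (hx n)⟩
  -- the subgradient inequality of `μs n` at `xs n`, tested against `x`, then monotonicity of `μs n`
  have hstep : ∀ m n, m ≤ n → ⨅ k, F (xs k) ≤ μs n (xs m) - μs n x + F x := fun m n hmn => by
    linarith [ciInf_le hbdd n, hμs n x, hmon n (hxs hmn)]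
  have hle : ∀ m, ⨅ k, F (xs k) ≤ μ (xs m) - μ x + F x := fun m =>
    ge_of_tendsto (((hlim (xs m)).sub (hlim x)).add_const (F x))
      (Eventually.mono (hU (eventually_ge_atTop m)) (hstep m))
  have hinf : ⨅ k, F (xs k) = F x := by
    refine le_antisymm ?_ (le_ciInf fun n => hmono (hx n))
    simpa using ge_of_tendsto (((hμ μ hμc).sub_const (μ x)).add_const (F x)) (.of_forall hle)
  rw [← hinf]
  exact tendsto_atTop_ciInf (hmono.comp_antitone hxs) hbdd

variable [TopologicalSpace V]

def ContinuousFromAbove (f : V → ℝ) : Prop :=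
  ∀ (xs : ℕ → V) (x : V), Antitone xs → Tendsto xs atTop (𝓝 x) →
    Tendsto (fun n => f (xs n)) atTop (𝓝 (f x))

theorem ContinuousFromAbove.of_sub_le [OrderClosedTopology V] [IsTopologicalAddGroup V]
    [ContinuousConstSMul ℝ V] (hF : ContinuousFromAbove F) (hmono : Monotone F)
    {μ : V →ₗ[ℝ] ℝ} {c : ℝ} (hμ : ∀ y, μ y - F y ≤ c) : ContinuousFromAbove μ := by
  intro xs x hxs hlim
  have hmon := LinearMap.monotone_of_sub_le hmono hμ
  have hx : ∀ n, x ≤ xs n := hxs.le_of_tendsto hlim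
  have hbdd : BddBelow (range fun n => μ (xs n - x)) :=
    ⟨0, by rintro _ ⟨n, rfl⟩; simpa using hmon (sub_nonneg.2 (hx n))⟩
  have hL : Tendsto (fun n => μ (xs n - x)) atTop (𝓝 (⨅ n, μ (xs n - x))) :=
    tendsto_atTop_ciInf (hmon.comp_antitone fun m n h => sub_le_sub_right (hxs h) x) hbdd
  have hL0 : ⨅ n, μ (xs n - x) = 0 := by
    refine le_antisymm (nonpos_of_forall_pos_mul_le (b := F 0 + c) fun r hr => ?_)
      (le_ciInf fun n => by simpa using hmon (sub_nonneg.2 (hx n)))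
    have hFr : Tendsto (fun n => F (r • (xs n - x))) atTop (𝓝 (F 0)) := by
      refine hF _ 0
        (fun m n h => smul_le_smul_of_nonneg_left (sub_le_sub_right (hxs h) x) hr.le) ?_
      simpa using ((hlim.sub_const x).const_smul r)
    refine le_of_tendsto_of_tendsto' (hL.const_mul r) (hFr.add_const c) fun n => ?_
    have := hμ (r • (xs n - x))
    rw [map_smul, smul_eq_mul] at this
    linarith
  rw [hL0] at hL
  simpa using hL.add_const (μ x)

theorem ConvexOn.continuousFromAbove_iff [OrderClosedTopology V] [IsTopologicalAddGroup V]
    [ContinuousConstSMul ℝ V] (hF : ConvexOn ℝ univ F) (hmono : Monotone F) {u : V}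
    (hu : ∀ r : ℝ, F (r • u) = r) (hbdd : ∀ x, ∃ C : ℝ, x ≤ C • u) :
    ContinuousFromAbove F ↔
      ∀ μ : V →ₗ[ℝ] ℝ, (∃ c, ∀ y, μ y - F y ≤ c) → ContinuousFromAbove μ := by
  refine ⟨fun h μ ⟨c, hμ⟩ => h.of_sub_le hmono hμ, fun h xs x hxs hlim => ?_⟩
  obtain ⟨C, hC⟩ := hbdd (xs 0)
  exact hF.tendsto_of_antitone hmono hu hxs (hxs.le_of_tendsto hlim) hC
    fun μ hμ => h μ ⟨_, hμ⟩ xs x hxs hlim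

end ContinuityFromAbove

instance Submodule.posSMulMono {R E : Type*} [Semiring R] [PartialOrder R] [AddCommMonoid E]
    [PartialOrder E] [Module R E] [PosSMulMono R E] (M : Submodule R E) : PosSMulMono R M :=
  ⟨fun _ ha _ _ h => smul_le_smul_of_nonneg_left (α := R) (b₁ := (_ : E)) h ha⟩

theorem Submodule.continuousFromAbove_iff {Ω : Type*} {M : Submodule ℝ (Ω → ℝ)} {f : M → ℝ} :
    ContinuousFromAbove f ↔ ∀ (Xn : ℕ → M) (X : M), (∀ ω, Antitone fun n => (Xn n : Ω → ℝ) ω) →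
      (∀ ω, Tendsto (fun n => (Xn n : Ω → ℝ) ω) atTop (𝓝 ((X : Ω → ℝ) ω))) →
      Tendsto (fun n => f (Xn n)) atTop (𝓝 (f X)) := by
  refine forall₂_congr fun Xn X => ?_
  rw [tendsto_subtype_rng, tendsto_pi_nhds]
  exact imp_congr_left ⟨fun h ω _ _ hmn => h hmn ω, fun h _ _ hmn ω => h ω hmn⟩

theorem stmt10 {Ω : Type*} [MeasurableSpace Ω]
    (M : Submodule ℝ (Ω → ℝ)) (hM : ∀ X ∈ M, IsLinfty X)
    (hone : (fun _ : Ω => (1:ℝ)) ∈ M)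
    (E : (Ω → ℝ) → ℝ)
    (hmono : ∀ X ∈ M, ∀ Y ∈ M, (∀ ω, X ω ≤ Y ω) → E X ≤ E Y)
    (hcp : ∀ c : ℝ, E (fun _ : Ω => c) = c)
    (hconvex : ∀ X ∈ M, ∀ Y ∈ M, ∀ t ∈ Icc (0:ℝ) 1,
      E (fun ω => t * X ω + (1 - t) * Y ω) ≤ t * E X + (1 - t) * E Y) :
    -- `E` is continuous from above on `M` ...
    (∀ (Xn : ℕ → M) (X : M), (∀ ω, Antitone fun n => (Xn n : Ω → ℝ) ω) →
      (∀ ω, Tendsto (fun n => (Xn n : Ω → ℝ) ω) atTop (nhds ((X : Ω → ℝ) ω))) →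
      Tendsto (fun n => E (Xn n : Ω → ℝ)) atTop (nhds (E (X : Ω → ℝ)))) ↔
    -- ... iff every `μ ∈ M'` with `E*(μ) < ∞` is continuous from above
    (∀ μ : M →ₗ[ℝ] ℝ, (∃ c : ℝ, ∀ X : M, μ X - E (X : Ω → ℝ) ≤ c) →
      ∀ (Xn : ℕ → M) (X : M), (∀ ω, Antitone fun n => (Xn n : Ω → ℝ) ω) →
        (∀ ω, Tendsto (fun n => (Xn n : Ω → ℝ) ω) atTop (nhds ((X : Ω → ℝ) ω))) →
        Tendsto (fun n => μ (Xn n)) atTop (nhds (μ X))) := by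
  set F : M → ℝ := fun X => E X
  let one : M := ⟨_, hone⟩
  have hconv : ConvexOn ℝ univ F := ⟨convex_univ, fun X _ Y _ a b ha hb hab => by
    obtain rfl : b = 1 - a := by linarith
    exact hconvex X X.2 Y Y.2 a ⟨ha, by linarith⟩⟩
  have hFmono : Monotone F := fun X Y h => hmono X X.2 Y Y.2 h
  have hFone : ∀ r : ℝ, F (r • one) = r := fun r => by
    have h : ((r • one : M) : Ω → ℝ) = fun _ => r := funext fun _ => by simp [one]
    simp only [F, h, hcp]
  have hbdd : ∀ X : M, ∃ C : ℝ, X ≤ C • one := fun X => by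
    obtain ⟨-, C, hC⟩ := hM X X.2
    exact ⟨C, fun ω => by simpa [one] using (le_abs_self _).trans (hC ω)⟩
  simpa only [Submodule.continuousFromAbove_iff] using
    hconv.continuousFromAbove_iff hFmono hFone hbdd
end

section
/- Let Ω be a topological space with Borel σ-algebra F, P ⊆ ca₊¹(Ω,F) a tight family of Borel probability measures, and define E(X) := sup_{μ∈P} ∫X dμ for X ∈ C_b(Ω). Then the sublinear pre-expectation E is continuous from above: if Xₙ ∈ C_b(Ω), Xₙ ↓ X pointwise with X ∈ C_b(Ω), then E(Xₙ) ↓ E(X). -/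
/-!
By Dini's theorem `X n → X₀` uniformly on every compact set `K`, and `0 ≤ X n - X₀ ≤ X 0 - X₀`
is uniformly bounded. Splitting `∫ (X n - X₀) dμ` over `K` and `Kᶜ`, tightness makes the
contribution of `Kᶜ` small for all `μ ∈ P` simultaneously, so `∫ X n dμ ≤ ∫ X₀ dμ + ε` uniformly
in `μ ∈ P` for large `n`; this bound passes to the suprema.
-/

open Filter MeasureTheory Set

/-- In `ℝ` the term of `⨆ i ∈ s, f i` at `i ∉ s` is `sSup ∅ = 0`; hence the assumption `0 ≤ c`. -/
lemma Real.biSup_le_biSup_add {ι : Type*} [Nonempty ι] {s : Set ι} {f g : ι → ℝ}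
    (hg : BddAbove (g '' s)) {c : ℝ} (hc : 0 ≤ c) (hfg : ∀ i ∈ s, f i ≤ g i + c) :
    ⨆ i ∈ s, f i ≤ (⨆ i ∈ s, g i) + c := by
  obtain ⟨B, hB⟩ := hg
  have hbdd : BddAbove (range fun i => ⨆ _ : i ∈ s, g i) :=
    ⟨max B 0, forall_mem_range.2 fun i => Real.iSup_le
      (fun hi => (hB (mem_image_of_mem g hi)).trans (le_max_left _ _)) (le_max_right _ _)⟩
  refine ciSup_le fun i => ?_
  have hgi := le_ciSup hbdd i
  by_cases hi : i ∈ s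
  · rw [ciSup_pos hi] at hgi ⊢
    linarith [hfg i hi]
  · rw [ciSup_neg hi, Real.sSup_empty] at hgi ⊢
    linarith

lemma Real.biSup_mono {ι : Type*} [Nonempty ι] {s : Set ι} {f g : ι → ℝ}
    (hg : BddAbove (g '' s)) (hfg : ∀ i ∈ s, f i ≤ g i) : ⨆ i ∈ s, f i ≤ ⨆ i ∈ s, g i := by
  simpa using Real.biSup_le_biSup_add hg le_rfl (by simpa using hfg)

lemma integral_le_add_mul_measureReal_compl {Ω : Type*} [MeasurableSpace Ω] {μ : Measure Ω}
    [IsProbabilityMeasure μ] {g : Ω → ℝ} (hg : Integrable g μ) {K : Set Ω} {η C : ℝ}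
    (hη : 0 ≤ η) (hgK : ∀ x ∈ K, g x ≤ η) (hgC : ∀ x, g x ≤ C) :
    ∫ x, g x ∂μ ≤ η + C * μ.real Kᶜ := by
  set T := toMeasurable μ Kᶜ
  have hT : MeasurableSet T := measurableSet_toMeasurable μ Kᶜ
  have hind : Integrable (T.indicator fun _ => C) μ := (integrable_const C).indicator hT
  have hg_le : ∀ x, g x ≤ η + T.indicator (fun _ => C) x := by
    intro x
    by_cases hx : x ∈ T
    · rw [indicator_of_mem hx]
      linarith [hgC x]
    · rw [indicator_of_notMem hx, add_zero]
      exact hgK x (by_contra fun hxK => hx (subset_toMeasurable μ Kᶜ hxK))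
  calc ∫ x, g x ∂μ ≤ ∫ x, (η + T.indicator (fun _ => C) x) ∂μ :=
        integral_mono hg ((integrable_const η).add hind) hg_le
    _ = η + C * μ.real Kᶜ := by
      have hTK : μ.real T = μ.real Kᶜ := by simp only [measureReal_def, T, measure_toMeasurable]
      rw [integral_add (integrable_const η) hind, integral_indicator_const C hT, integral_const, hTK]
      simp [mul_comm]

lemma BoundedContinuousFunction.bddAbove_integral_image {Ω : Type*} [TopologicalSpace Ω]
    [MeasurableSpace Ω] [OpensMeasurableSpace Ω] {P : Set (Measure Ω)}
    (hP : ∀ μ ∈ P, IsProbabilityMeasure μ) (Y : BoundedContinuousFunction Ω ℝ) :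
    BddAbove ((fun μ => ∫ ω, Y ω ∂μ) '' P) := by
  refine ⟨‖Y‖, forall_mem_image.2 fun μ hμ => ?_⟩
  have := hP μ hμ
  exact (le_abs_self _).trans (Y.norm_integral_le_norm μ)

lemma eventually_forall_integral_le_add_of_tight {Ω : Type*}
    [TopologicalSpace Ω] [MeasurableSpace Ω] [OpensMeasurableSpace Ω] {P : Set (Measure Ω)}
    (hP : ∀ μ ∈ P, IsProbabilityMeasure μ)
    (htight : ∀ ε : ℝ, 0 < ε → ∃ K : Set Ω, IsCompact K ∧ ∀ μ ∈ P, μ Kᶜ ≤ ENNReal.ofReal ε)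
    {X : ℕ → BoundedContinuousFunction Ω ℝ} {X₀ : BoundedContinuousFunction Ω ℝ}
    (hanti : ∀ ω, Antitone fun n => X n ω)
    (hlim : ∀ ω, Tendsto (fun n => X n ω) atTop (nhds (X₀ ω))) {ε : ℝ} (hε : 0 < ε) :
    ∀ᶠ n in atTop, ∀ μ ∈ P, ∫ ω, X n ω ∂μ ≤ (∫ ω, X₀ ω ∂μ) + ε := by
  set C := ‖X 0 - X₀‖
  have hC : 0 ≤ C := norm_nonneg _
  set δ := ε / (2 * (C + 1))
  have hδ : 0 < δ := by positivity
  have hCδ : C * δ ≤ ε / 2 :=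
    calc C * δ ≤ (C + 1) * δ := by gcongr; linarith
      _ = ε / 2 := by simp only [δ]; field_simp
  obtain ⟨K, hK, hKc⟩ := htight δ hδ
  have hunif : TendstoUniformlyOn (fun n => ⇑(X n)) X₀ atTop K :=
    Antitone.tendstoUniformlyOn_of_forall_tendsto hK (fun n => (X n).continuous.continuousOn)
      (fun ω _ => hanti ω) X₀.continuous.continuousOn (fun ω _ => hlim ω)
  filter_upwards [Metric.tendstoUniformlyOn_iff.1 hunif (ε / 2) (by positivity)] with n hn μ hμ
  have := hP μ hμ
  have hnK : ∀ ω ∈ K, X n ω - X₀ ω ≤ ε / 2 := fun ω hω => (abs_sub_lt_iff.1 (hn ω hω)).2.le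
  have hnC : ∀ ω, X n ω - X₀ ω ≤ C := fun ω =>
    (sub_le_sub_right (hanti ω (Nat.zero_le n)) _).trans ((X 0 - X₀).apply_le_norm ω)
  have hKδ : μ.real Kᶜ ≤ δ := ENNReal.toReal_le_of_le_ofReal hδ.le (hKc μ hμ)
  have hsplit := integral_le_add_mul_measureReal_compl (g := fun ω => X n ω - X₀ ω)
    (((X n).integrable μ).sub (X₀.integrable μ)) (by positivity) hnK hnC
  rw [integral_sub ((X n).integrable μ) (X₀.integrable μ)] at hsplit
  linarith [mul_le_mul_of_nonneg_left hKδ hC]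

theorem stmt11 {Ω : Type*} [TopologicalSpace Ω] [MeasurableSpace Ω] [BorelSpace Ω]
    (P : Set (Measure Ω))
    (hP : ∀ μ ∈ P, IsProbabilityMeasure μ)
    (htight : ∀ ε : ℝ, 0 < ε →
      ∃ K : Set Ω, IsCompact K ∧ ∀ μ ∈ P, μ Kᶜ ≤ ENNReal.ofReal ε)
    (X : ℕ → BoundedContinuousFunction Ω ℝ) (X₀ : BoundedContinuousFunction Ω ℝ)
    (hanti : ∀ ω, Antitone fun n => X n ω)
    (hlim : ∀ ω, Tendsto (fun n => X n ω) atTop (nhds (X₀ ω))) :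
    Tendsto (fun n => ⨆ μ ∈ P, ∫ ω, X n ω ∂μ) atTop
      (nhds (⨆ μ ∈ P, ∫ ω, X₀ ω ∂μ)) := by
  set E₀ := ⨆ μ ∈ P, ∫ ω, X₀ ω ∂μ
  have hE₀_le : ∀ n, E₀ ≤ ⨆ μ ∈ P, ∫ ω, X n ω ∂μ := fun n =>
    Real.biSup_mono ((X n).bddAbove_integral_image hP) fun μ hμ => by
      have := hP μ hμ
      exact integral_mono (X₀.integrable μ) ((X n).integrable μ)
        fun ω => (hanti ω).le_of_tendsto (hlim ω) n
  refine tendsto_order.2 ⟨fun a ha => .of_forall fun n => ha.trans_le (hE₀_le n), fun a ha => ?_⟩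
  filter_upwards [eventually_forall_integral_le_add_of_tight hP htight hanti hlim
    (half_pos (sub_pos.2 ha))] with n hn
  calc (⨆ μ ∈ P, ∫ ω, X n ω ∂μ) ≤ E₀ + (a - E₀) / 2 :=
        Real.biSup_le_biSup_add (X₀.bddAbove_integral_image hP) (by linarith) hn
    _ < a := by linarith
end

section
/- Let F ⊆ 2^Ω be a σ-algebra and E : L^∞(Ω,F) → ℝ an expectation that is continuous from below. Then its maximal extension Ê(X) := inf{E(X₀) : X₀ ∈ L^∞(Ω,F), X₀ ≥ X} to the space L^∞(Ω,2^Ω) of all bounded functions is also continuous from below. -/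
open Filter

/-- Bounded (not necessarily measurable) functions: `L^∞(Ω, 2^Ω)`. -/
def IsBdd {Ω : Type*} (X : Ω → ℝ) : Prop := ∃ C : ℝ, ∀ ω, |X ω| ≤ C

/-- Maximal extension `Ê(X) = inf { E(X₀) : X₀ ∈ L^∞(Ω,F), X₀ ≥ X }` to the
space of all bounded functions. -/
noncomputable def EhatAll {Ω : Type*} [MeasurableSpace Ω] (E : (Ω → ℝ) → ℝ)
    (X : Ω → ℝ) : ℝ :=
  sInf (E '' {X₀ | IsLinfty X₀ ∧ ∀ ω, X ω ≤ X₀ ω})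

/-! Given `Xₙ ↑ X`, pick `L^∞(F)`-majorants `Yₙ ≥ Xₙ` with `E Yₙ < Ê Xₙ + ε`, truncated to the
common bounds of the sequence. The tail infima `Zₙ = inf_{k ≥ n} Y_k` are still measurable
majorants of `Xₙ`, and they increase to `W = liminf Yₙ ≥ X`. Continuity from below of `E` and
monotonicity give `Ê X ≤ E W = lim E Zₙ ≤ sup Ê Xₙ + ε`. -/

open Set

section TailInf

variable {Ω : Type*}

noncomputable def tailInf (Y : ℕ → Ω → ℝ) (n : ℕ) (ω : Ω) : ℝ := ⨅ k, Y (n + k) ω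

variable {Y : ℕ → Ω → ℝ} {a b : ℝ}

lemma bddBelow_range_tail (hY : ∀ n ω, a ≤ Y n ω) (n : ℕ) (ω : Ω) :
    BddBelow (range fun k => Y (n + k) ω) :=
  ⟨a, forall_mem_range.2 fun k => hY (n + k) ω⟩

lemma tailInf_le (hY : ∀ n ω, a ≤ Y n ω) (n : ℕ) (ω : Ω) : tailInf Y n ω ≤ Y n ω :=
  ciInf_le (bddBelow_range_tail hY n ω) 0

lemma tailInf_mem_Icc (hY : ∀ n ω, Y n ω ∈ Icc a b) (n : ℕ) (ω : Ω) :
    tailInf Y n ω ∈ Icc a b :=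
  ⟨le_ciInf fun k => (hY (n + k) ω).1,
    (tailInf_le (fun n ω => (hY n ω).1) n ω).trans (hY n ω).2⟩

lemma monotone_tailInf (hY : ∀ n ω, a ≤ Y n ω) (ω : Ω) : Monotone fun n => tailInf Y n ω := by
  refine monotone_nat_of_le_succ fun n => le_ciInf fun k => ?_
  have h := ciInf_le (bddBelow_range_tail hY n ω) (k + 1)
  rwa [← Nat.add_assoc, Nat.add_right_comm] at h

lemma measurable_tailInf [MeasurableSpace Ω] (hY : ∀ n, Measurable (Y n)) (n : ℕ) :
    Measurable (tailInf Y n) :=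
  Measurable.iInf fun k => hY (n + k)

end TailInf

section Majorants

variable {Ω : Type*} [MeasurableSpace Ω]

lemma IsLinfty.of_mem_Icc {X : Ω → ℝ} {a b : ℝ} (hX : Measurable X)
    (hab : ∀ ω, X ω ∈ Icc a b) : IsLinfty X :=
  ⟨hX, max |a| |b|, fun ω => abs_le_max_abs_abs (hab ω).1 (hab ω).2⟩

lemma IsLinfty.const (c : ℝ) : IsLinfty (fun _ : Ω => c) :=
  ⟨measurable_const, |c|, fun _ => le_rfl⟩

variable {E : (Ω → ℝ) → ℝ} {X Y : Ω → ℝ} {a b : ℝ}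

def MonotoneOnLinfty (E : (Ω → ℝ) → ℝ) : Prop :=
  ∀ X Y : Ω → ℝ, IsLinfty X → IsLinfty Y → (∀ ω, X ω ≤ Y ω) → E X ≤ E Y

def linftyMajorants (X : Ω → ℝ) : Set (Ω → ℝ) := {X₀ | IsLinfty X₀ ∧ ∀ ω, X ω ≤ X₀ ω}

lemma linftyMajorants_anti (hXY : ∀ ω, X ω ≤ Y ω) : linftyMajorants Y ⊆ linftyMajorants X :=
  fun _ hX₀ => ⟨hX₀.1, fun ω => (hXY ω).trans (hX₀.2 ω)⟩

lemma image_linftyMajorants_nonempty (hb : ∀ ω, X ω ≤ b) :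
    (E '' linftyMajorants X).Nonempty :=
  ⟨_, mem_image_of_mem E (show (fun _ => b) ∈ linftyMajorants X from ⟨IsLinfty.const b, hb⟩)⟩

lemma bddBelow_image_linftyMajorants (hmono : MonotoneOnLinfty E)
    (ha : ∀ ω, a ≤ X ω) : BddBelow (E '' linftyMajorants X) := by
  refine ⟨E fun _ => a, ?_⟩
  rintro _ ⟨X₀, ⟨hX₀, hXX₀⟩, rfl⟩
  exact hmono _ _ (IsLinfty.const a) hX₀ fun ω => (ha ω).trans (hXX₀ ω)

lemma EhatAll_le (hmono : MonotoneOnLinfty E)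
    (ha : ∀ ω, a ≤ X ω) {X₀ : Ω → ℝ} (hX₀ : X₀ ∈ linftyMajorants X) : EhatAll E X ≤ E X₀ :=
  csInf_le (bddBelow_image_linftyMajorants hmono ha) (mem_image_of_mem E hX₀)

lemma EhatAll_mono (hmono : MonotoneOnLinfty E)
    (ha : ∀ ω, a ≤ X ω) (hb : ∀ ω, Y ω ≤ b) (hXY : ∀ ω, X ω ≤ Y ω) :
    EhatAll E X ≤ EhatAll E Y :=
  csInf_le_csInf (bddBelow_image_linftyMajorants hmono ha) (image_linftyMajorants_nonempty hb)
    (image_mono (linftyMajorants_anti hXY))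

lemma exists_mem_linftyMajorants_lt_EhatAll_add (hmono : MonotoneOnLinfty E)
    (hab : ∀ ω, X ω ∈ Icc a b) {ε : ℝ} (hε : 0 < ε) :
    ∃ X₀ ∈ linftyMajorants X, (∀ ω, X₀ ω ∈ Icc a b) ∧ E X₀ < EhatAll E X + ε := by
  obtain ⟨_, ⟨Y, hY, rfl⟩, hlt⟩ :=
    exists_lt_of_csInf_lt (image_linftyMajorants_nonempty fun ω => (hab ω).2)
      (lt_add_of_pos_right (EhatAll E X) hε)
  have hmin : ∀ ω, min (Y ω) b ∈ Icc a b := fun ω =>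
    ⟨le_min ((hab ω).1.trans (hY.2 ω)) ((hab ω).1.trans (hab ω).2), min_le_right _ _⟩
  have hminL : IsLinfty fun ω => min (Y ω) b :=
    IsLinfty.of_mem_Icc (hY.1.1.min measurable_const) hmin
  refine ⟨fun ω => min (Y ω) b, ⟨hminL, fun ω => le_min (hY.2 ω) (hab ω).2⟩, hmin, ?_⟩
  exact (hmono _ _ hminL hY.1 fun ω => min_le_left _ _).trans_lt hlt

lemma EhatAll_le_add_of_tendsto (hmono : MonotoneOnLinfty E)
    (hcontbelow : ∀ (Xn : ℕ → Ω → ℝ) (X : Ω → ℝ), (∀ n, IsLinfty (Xn n)) →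
      IsLinfty X → (∀ ω, Monotone fun n => Xn n ω) →
      (∀ ω, Tendsto (fun n => Xn n ω) atTop (nhds (X ω))) →
      Tendsto (fun n => E (Xn n)) atTop (nhds (E X)))
    {Xn : ℕ → Ω → ℝ} (hab : ∀ n ω, Xn n ω ∈ Icc a b) (hmX : ∀ ω, Monotone fun n => Xn n ω)
    (htX : ∀ ω, Tendsto (fun n => Xn n ω) atTop (nhds (X ω)))
    {s ε : ℝ} (hε : 0 < ε) (hs : ∀ n, EhatAll E (Xn n) ≤ s) : EhatAll E X ≤ s + ε := by
  choose Y hY hYab hYE using fun n =>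
    exists_mem_linftyMajorants_lt_EhatAll_add hmono (hab n) hε
  have hYa : ∀ n ω, a ≤ Y n ω := fun n ω => (hYab n ω).1
  set Z := tailInf Y
  have hZab := tailInf_mem_Icc hYab
  have hZL : ∀ n, IsLinfty (Z n) := fun n =>
    IsLinfty.of_mem_Icc (measurable_tailInf (fun k => (hY k).1.1) n) (hZab n)
  have hXnZ : ∀ n ω, Xn n ω ≤ Z n ω := fun n ω =>
    le_ciInf fun k => (hmX ω (Nat.le_add_right n k)).trans ((hY (n + k)).2 ω)
  set W : Ω → ℝ := fun ω => ⨆ n, Z n ω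
  have hZbdd : ∀ ω, BddAbove (range fun n => Z n ω) := fun ω =>
    ⟨b, forall_mem_range.2 fun n => (hZab n ω).2⟩
  have hZW : ∀ ω, Tendsto (fun n => Z n ω) atTop (nhds (W ω)) := fun ω =>
    tendsto_atTop_ciSup (monotone_tailInf hYa ω) (hZbdd ω)
  have hWL : IsLinfty W := IsLinfty.of_mem_Icc (Measurable.iSup fun n => (hZL n).1) fun ω =>
    ⟨(hZab 0 ω).1.trans (le_ciSup (hZbdd ω) 0), ciSup_le fun n => (hZab n ω).2⟩
  have hXW : ∀ ω, X ω ≤ W ω := fun ω =>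
    le_of_tendsto' (htX ω) fun n => (hXnZ n ω).trans (le_ciSup (hZbdd ω) n)
  have hEZ : ∀ n, E (Z n) ≤ s + ε := fun n => calc
    E (Z n) ≤ E (Y n) := hmono _ _ (hZL n) (hY n).1 (tailInf_le hYa n)
    _ ≤ s + ε := ((hYE n).trans_le (add_le_add_left (hs n) ε)).le
  have hXa : ∀ ω, a ≤ X ω := fun ω => (hab 0 ω).1.trans ((hmX ω).ge_of_tendsto (htX ω) 0)
  calc EhatAll E X ≤ E W := EhatAll_le hmono hXa ⟨hWL, hXW⟩
    _ ≤ s + ε := le_of_tendsto' (hcontbelow Z W hZL hWL (monotone_tailInf hYa) hZW) hEZ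

end Majorants

theorem stmt12_general {Ω : Type*} [MeasurableSpace Ω]
    (E : (Ω → ℝ) → ℝ)
    (hmono : ∀ X Y : Ω → ℝ, IsLinfty X → IsLinfty Y → (∀ ω, X ω ≤ Y ω) → E X ≤ E Y)
    (hcontbelow : ∀ (Xn : ℕ → Ω → ℝ) (X : Ω → ℝ), (∀ n, IsLinfty (Xn n)) →
      IsLinfty X → (∀ ω, Monotone fun n => Xn n ω) →
      (∀ ω, Tendsto (fun n => Xn n ω) atTop (nhds (X ω))) →
      Tendsto (fun n => E (Xn n)) atTop (nhds (E X))) :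
    -- `Ê` is continuous from below on `L^∞(Ω, 2^Ω)`
    ∀ (Xn : ℕ → Ω → ℝ) (X : Ω → ℝ), (∀ n, IsBdd (Xn n)) → IsBdd X →
      (∀ ω, Monotone fun n => Xn n ω) →
      (∀ ω, Tendsto (fun n => Xn n ω) atTop (nhds (X ω))) →
      Tendsto (fun n => EhatAll E (Xn n)) atTop (nhds (EhatAll E X)) := by
  intro Xn X hXn hX hmX htX
  obtain ⟨a, ha⟩ : ∃ a, ∀ ω, a ≤ Xn 0 ω :=
    let ⟨C, hC⟩ := hXn 0; ⟨-C, fun ω => (abs_le.1 (hC ω)).1⟩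
  obtain ⟨b, hb⟩ : ∃ b, ∀ ω, X ω ≤ b := let ⟨C, hC⟩ := hX; ⟨C, fun ω => (abs_le.1 (hC ω)).2⟩
  have hXnX : ∀ n ω, Xn n ω ≤ X ω := fun n ω => (hmX ω).ge_of_tendsto (htX ω) n
  have hab : ∀ n ω, Xn n ω ∈ Icc a b := fun n ω =>
    ⟨(ha ω).trans (hmX ω n.zero_le), (hXnX n ω).trans (hb ω)⟩
  have hmonoEhat : Monotone fun n => EhatAll E (Xn n) := fun m n hmn =>
    EhatAll_mono hmono (fun ω => (hab m ω).1) (fun ω => (hab n ω).2) fun ω => hmX ω hmn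
  have hle : ∀ n, EhatAll E (Xn n) ≤ EhatAll E X := fun n =>
    EhatAll_mono hmono (fun ω => (hab n ω).1) hb (hXnX n)
  have hbdd : BddAbove (range fun n => EhatAll E (Xn n)) := ⟨_, forall_mem_range.2 hle⟩
  convert tendsto_atTop_ciSup hmonoEhat hbdd using 2
  exact le_antisymm (le_of_forall_pos_le_add fun ε hε =>
    EhatAll_le_add_of_tendsto hmono hcontbelow hab hmX htX hε (le_ciSup hbdd)) (ciSup_le hle)

theorem stmt12 {Ω : Type*} [MeasurableSpace Ω]
    (E : (Ω → ℝ) → ℝ)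
    (hmono : ∀ X Y : Ω → ℝ, IsLinfty X → IsLinfty Y → (∀ ω, X ω ≤ Y ω) → E X ≤ E Y)
    (hcp : ∀ c : ℝ, E (fun _ : Ω => c) = c)
    (hcontbelow : ∀ (Xn : ℕ → Ω → ℝ) (X : Ω → ℝ), (∀ n, IsLinfty (Xn n)) →
      IsLinfty X → (∀ ω, Monotone fun n => Xn n ω) →
      (∀ ω, Tendsto (fun n => Xn n ω) atTop (nhds (X ω))) →
      Tendsto (fun n => E (Xn n)) atTop (nhds (E X))) :
    -- `Ê` is continuous from below on `L^∞(Ω, 2^Ω)`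
    ∀ (Xn : ℕ → Ω → ℝ) (X : Ω → ℝ), (∀ n, IsBdd (Xn n)) → IsBdd X →
      (∀ ω, Monotone fun n => Xn n ω) →
      (∀ ω, Tendsto (fun n => Xn n ω) atTop (nhds (X ω))) →
      Tendsto (fun n => EhatAll E (Xn n)) atTop (nhds (EhatAll E X)) :=
  stmt12_general E hmono hcontbelow
end

section
/- Let M be a Riesz subspace of L^∞(Ω,F) with 1 ∈ M, and E : M → ℝ a pre-expectation continuous from above. Then there exists a unique pre-expectation E_δ : M_δ → ℝ which is continuous from above and extends E; moreover E_δ = Ê|_{M_δ}, where Ê is the maximal extension. In particular, for X ∈ M_δ and any sequence (Xₙ) ⊆ M with Xₙ ↓ X, E_δ(X) = lim_n E(Xₙ), independently of the chosen sequence. -/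
open Filter

/-- `M_δ`: bounded pointwise decreasing limits of sequences in `M`. -/
def Mdelta {Ω : Type*} (M : Set (Ω → ℝ)) : Set (Ω → ℝ) :=
  {X | IsBdd X ∧ ∃ Xn : ℕ → Ω → ℝ, (∀ n, Xn n ∈ M) ∧
    (∀ ω, Antitone fun n => Xn n ω) ∧
    (∀ ω, Tendsto (fun n => Xn n ω) atTop (nhds (X ω)))}

/-- Iterated minimum `min_{i ≤ j} Y i k`. -/
def minUpTo {Ω : Type*} (Y : ℕ → ℕ → Ω → ℝ) (k : ℕ) : ℕ → Ω → ℝ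
  | 0 => Y 0 k
  | (j+1) => fun ω => min (minUpTo Y k j ω) (Y (j+1) k ω)

lemma minUpTo_mem {Ω : Type*} {M : Set (Ω → ℝ)}
    (hmin : ∀ X ∈ M, ∀ Y ∈ M, (fun ω => min (X ω) (Y ω)) ∈ M)
    (Y : ℕ → ℕ → Ω → ℝ) (k : ℕ) (hY : ∀ i, Y i k ∈ M) (j : ℕ) :
    minUpTo Y k j ∈ M := by
  induction j with
  | zero => exact hY 0
  | succ j ih => exact hmin _ ih _ (hY (j+1))

lemma minUpTo_le {Ω : Type*} (Y : ℕ → ℕ → Ω → ℝ) (k : ℕ) (j : ℕ) (i : ℕ)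
    (hij : i ≤ j) (ω : Ω) : minUpTo Y k j ω ≤ Y i k ω := by
  induction j with
  | zero => simp_all [minUpTo]
  | succ j ih =>
    rcases Nat.lt_or_ge i (j+1) with h | h
    · exact (min_le_left _ _).trans (ih (Nat.lt_succ_iff.mp h))
    · have hi : i = j + 1 := le_antisymm hij h
      subst hi
      exact min_le_right _ _

lemma le_minUpTo {Ω : Type*} (Y : ℕ → ℕ → Ω → ℝ) (k : ℕ) (j : ℕ) (c : ℝ) (ω : Ω)
    (h : ∀ i ≤ j, c ≤ Y i k ω) : c ≤ minUpTo Y k j ω := by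
  induction j with
  | zero => exact h 0 le_rfl
  | succ j ih =>
    exact le_min (ih fun i hi => h i (hi.trans (Nat.le_succ j))) (h (j+1) le_rfl)

/-- Key lemma: for `Xn ∈ M` decreasing to bounded `X`,
`Ê(X) = ⨅ n, E (Xn n)` and `E (Xn n) → Ê(X)`. -/
lemma ehat_key {Ω : Type*} (M : Set (Ω → ℝ))
    (hconst : ∀ c : ℝ, (fun _ : Ω => c) ∈ M)
    (hmax : ∀ X ∈ M, ∀ Y ∈ M, (fun ω => max (X ω) (Y ω)) ∈ M)
    (E : (Ω → ℝ) → ℝ)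
    (hmono : ∀ X ∈ M, ∀ Y ∈ M, (∀ ω, X ω ≤ Y ω) → E X ≤ E Y)
    (hcp : ∀ c : ℝ, E (fun _ : Ω => c) = c)
    (hcontabove : ∀ (Xn : ℕ → Ω → ℝ) (X : Ω → ℝ), (∀ n, Xn n ∈ M) → X ∈ M →
      (∀ ω, Antitone fun n => Xn n ω) →
      (∀ ω, Tendsto (fun n => Xn n ω) atTop (nhds (X ω))) →
      Tendsto (fun n => E (Xn n)) atTop (nhds (E X)))
    (X : Ω → ℝ) (C : ℝ) (hC : ∀ ω, |X ω| ≤ C)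
    (Xn : ℕ → Ω → ℝ) (hXnM : ∀ n, Xn n ∈ M)
    (hanti : ∀ ω, Antitone fun n => Xn n ω)
    (hlim : ∀ ω, Tendsto (fun n => Xn n ω) atTop (nhds (X ω))) :
    Ehat M E X = ⨅ n, E (Xn n) ∧
      Tendsto (fun n => E (Xn n)) atTop (nhds (Ehat M E X)) := by
  have hXge : ∀ n ω, X ω ≤ Xn n ω := fun n ω => (hanti ω).le_of_tendsto (hlim ω) n
  have hXlb : ∀ ω, -C ≤ X ω := fun ω => neg_le_of_abs_le (hC ω)
  have hSlb : ∀ y ∈ E '' {X₀ | X₀ ∈ M ∧ ∀ ω, X ω ≤ X₀ ω}, -C ≤ y := by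
    rintro y ⟨X₀, ⟨h1, h2⟩, rfl⟩
    calc -C = E (fun _ : Ω => -C) := (hcp (-C)).symm
      _ ≤ E X₀ := hmono _ (hconst (-C)) _ h1 (fun ω => (hXlb ω).trans (h2 ω))
  have bddS : BddBelow (E '' {X₀ | X₀ ∈ M ∧ ∀ ω, X ω ≤ X₀ ω}) := ⟨-C, hSlb⟩
  have hmemS : ∀ n, E (Xn n) ∈ E '' {X₀ | X₀ ∈ M ∧ ∀ ω, X ω ≤ X₀ ω} :=
    fun n => ⟨Xn n, ⟨hXnM n, hXge n⟩, rfl⟩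
  have bddR : BddBelow (Set.range fun n => E (Xn n)) := by
    refine ⟨-C, ?_⟩
    rintro y ⟨n, rfl⟩
    exact hSlb _ (hmemS n)
  have hle1 : Ehat M E X ≤ ⨅ n, E (Xn n) := le_ciInf fun n => csInf_le bddS (hmemS n)
  have hle2 : (⨅ n, E (Xn n)) ≤ Ehat M E X := by
    apply le_csInf ⟨E (Xn 0), hmemS 0⟩
    rintro y ⟨Y, ⟨hYM, hYge⟩, rfl⟩
    have hZ : Tendsto (fun n => E (fun ω => max (Xn n ω) (Y ω))) atTop (nhds (E Y)) := by
      refine hcontabove (fun n ω => max (Xn n ω) (Y ω)) Y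
        (fun n => hmax _ (hXnM n) _ hYM) hYM
        (fun ω a b hab => max_le_max ((hanti ω) hab) le_rfl)
        (fun ω => ?_)
      have h1 := (hlim ω).max (tendsto_const_nhds : Tendsto (fun _ : ℕ => Y ω) atTop (nhds (Y ω)))
      simpa [max_eq_right (hYge ω)] using h1
    refine ge_of_tendsto' hZ fun n => ?_
    exact (ciInf_le bddR n).trans
      (hmono _ (hXnM n) _ (hmax _ (hXnM n) _ hYM) (fun ω => le_max_left _ _))
  have heq : Ehat M E X = ⨅ n, E (Xn n) := le_antisymm hle1 hle2
  refine ⟨heq, ?_⟩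
  rw [heq]
  exact tendsto_atTop_ciInf
    (fun m n h => hmono _ (hXnM n) _ (hXnM m) fun ω => (hanti ω) h) bddR

theorem stmt13 {Ω : Type*} [MeasurableSpace Ω]
    (M : Set (Ω → ℝ)) (hM : ∀ X ∈ M, IsLinfty X)
    -- `M` is a Riesz subspace of `L^∞(Ω,F)` containing the constants
    (hconst : ∀ c : ℝ, (fun _ : Ω => c) ∈ M)
    (hadd : ∀ X ∈ M, ∀ Y ∈ M, (fun ω => X ω + Y ω) ∈ M)
    (hsmul : ∀ c : ℝ, ∀ X ∈ M, (fun ω => c * X ω) ∈ M)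
    (hmin : ∀ X ∈ M, ∀ Y ∈ M, (fun ω => min (X ω) (Y ω)) ∈ M)
    (hmax : ∀ X ∈ M, ∀ Y ∈ M, (fun ω => max (X ω) (Y ω)) ∈ M)
    (E : (Ω → ℝ) → ℝ)
    (hmono : ∀ X ∈ M, ∀ Y ∈ M, (∀ ω, X ω ≤ Y ω) → E X ≤ E Y)
    (hcp : ∀ c : ℝ, E (fun _ : Ω => c) = c)
    (hcontabove : ∀ (Xn : ℕ → Ω → ℝ) (X : Ω → ℝ), (∀ n, Xn n ∈ M) → X ∈ M →
      (∀ ω, Antitone fun n => Xn n ω) →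
      (∀ ω, Tendsto (fun n => Xn n ω) atTop (nhds (X ω))) →
      Tendsto (fun n => E (Xn n)) atTop (nhds (E X))) :
    ∃ Eδ : (Ω → ℝ) → ℝ,
      -- `E_δ` is a pre-expectation on `M_δ` ...
      (∀ X ∈ Mdelta M, ∀ Y ∈ Mdelta M, (∀ ω, X ω ≤ Y ω) → Eδ X ≤ Eδ Y) ∧
      (∀ c : ℝ, Eδ (fun _ : Ω => c) = c) ∧
      -- ... continuous from above on `M_δ` ...
      (∀ (Xn : ℕ → Ω → ℝ) (X : Ω → ℝ), (∀ n, Xn n ∈ Mdelta M) → X ∈ Mdelta M →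
        (∀ ω, Antitone fun n => Xn n ω) →
        (∀ ω, Tendsto (fun n => Xn n ω) atTop (nhds (X ω))) →
        Tendsto (fun n => Eδ (Xn n)) atTop (nhds (Eδ X))) ∧
      -- ... extending `E` ...
      (∀ X ∈ M, Eδ X = E X) ∧
      -- ... and `E_δ = Ê` on `M_δ`
      (∀ X ∈ Mdelta M, Eδ X = Ehat M E X) ∧
      -- limit formula, independent of the chosen sequence
      (∀ X ∈ Mdelta M, ∀ Xn : ℕ → Ω → ℝ, (∀ n, Xn n ∈ M) →
        (∀ ω, Antitone fun n => Xn n ω) →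
        (∀ ω, Tendsto (fun n => Xn n ω) atTop (nhds (X ω))) →
        Tendsto (fun n => E (Xn n)) atTop (nhds (Eδ X))) ∧
      -- uniqueness on `M_δ`
      (∀ E' : (Ω → ℝ) → ℝ,
        (∀ X ∈ Mdelta M, ∀ Y ∈ Mdelta M, (∀ ω, X ω ≤ Y ω) → E' X ≤ E' Y) →
        (∀ c : ℝ, E' (fun _ : Ω => c) = c) →
        (∀ (Xn : ℕ → Ω → ℝ) (X : Ω → ℝ), (∀ n, Xn n ∈ Mdelta M) → X ∈ Mdelta M →
          (∀ ω, Antitone fun n => Xn n ω) →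
          (∀ ω, Tendsto (fun n => Xn n ω) atTop (nhds (X ω))) →
          Tendsto (fun n => E' (Xn n)) atTop (nhds (E' X))) →
        (∀ X ∈ M, E' X = E X) →
        ∀ X ∈ Mdelta M, E' X = Eδ X) := by
  classical
  -- basic facts
  have hMsub : ∀ X ∈ M, X ∈ Mdelta M := by
    intro X hX
    obtain ⟨-, C, hC⟩ := hM X hX
    exact ⟨⟨C, hC⟩, fun _ => X, fun _ => hX, fun ω a b _ => le_rfl,
      fun ω => tendsto_const_nhds⟩
  have hSlb : ∀ (X : Ω → ℝ) (C : ℝ), (∀ ω, |X ω| ≤ C) →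
      ∀ y ∈ E '' {X₀ | X₀ ∈ M ∧ ∀ ω, X ω ≤ X₀ ω}, -C ≤ y := by
    rintro X C hC y ⟨X₀, ⟨h1, h2⟩, rfl⟩
    calc -C = E (fun _ : Ω => -C) := (hcp (-C)).symm
      _ ≤ E X₀ := hmono _ (hconst (-C)) _ h1
          (fun ω => (neg_le_of_abs_le (hC ω)).trans (h2 ω))
  have hbddS : ∀ (X : Ω → ℝ), IsBdd X →
      BddBelow (E '' {X₀ | X₀ ∈ M ∧ ∀ ω, X ω ≤ X₀ ω}) := by
    rintro X ⟨C, hC⟩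
    exact ⟨-C, hSlb X C hC⟩
  -- Ehat extends E
  have hext : ∀ X ∈ M, Ehat M E X = E X := by
    intro X hX
    obtain ⟨-, C, hC⟩ := hM X hX
    refine le_antisymm (csInf_le (hbddS X ⟨C, hC⟩) ⟨X, ⟨hX, fun ω => le_rfl⟩, rfl⟩) ?_
    have hne : (E '' {X₀ | X₀ ∈ M ∧ ∀ ω, X ω ≤ X₀ ω}).Nonempty :=
      ⟨E X, X, ⟨hX, fun ω => le_rfl⟩, rfl⟩
    apply le_csInf hne
    rintro y ⟨X₀, ⟨h1, h2⟩, rfl⟩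
    exact hmono _ hX _ h1 h2
  -- monotonicity of Ehat on Mdelta
  have hmonoδ : ∀ X ∈ Mdelta M, ∀ Y ∈ Mdelta M, (∀ ω, X ω ≤ Y ω) →
      Ehat M E X ≤ Ehat M E Y := by
    rintro X ⟨hXb, -⟩ Y ⟨-, Yn, hYnM, hYanti, hYlim⟩ hXY
    refine csInf_le_csInf (hbddS X hXb) ?_ ?_
    · exact ⟨E (Yn 0), Yn 0, ⟨hYnM 0, fun ω => (hYanti ω).le_of_tendsto (hYlim ω) 0⟩, rfl⟩
    · rintro y ⟨Y₀, ⟨h1, h2⟩, rfl⟩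
      exact ⟨Y₀, ⟨h1, fun ω => (hXY ω).trans (h2 ω)⟩, rfl⟩
  -- the limit formula for Ehat
  have hkey : ∀ X ∈ Mdelta M, ∀ Xn : ℕ → Ω → ℝ, (∀ n, Xn n ∈ M) →
      (∀ ω, Antitone fun n => Xn n ω) →
      (∀ ω, Tendsto (fun n => Xn n ω) atTop (nhds (X ω))) →
      Ehat M E X = (⨅ n, E (Xn n)) ∧
        Tendsto (fun n => E (Xn n)) atTop (nhds (Ehat M E X)) := by
    rintro X ⟨⟨C, hC⟩, -⟩ Xn hXnM hanti hlim
    exact ehat_key M hconst hmax E hmono hcp hcontabove X C hC Xn hXnM hanti hlim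
  -- continuity from above of Ehat on Mdelta
  have hcontδ : ∀ (Xn : ℕ → Ω → ℝ) (X : Ω → ℝ), (∀ n, Xn n ∈ Mdelta M) → X ∈ Mdelta M →
      (∀ ω, Antitone fun n => Xn n ω) →
      (∀ ω, Tendsto (fun n => Xn n ω) atTop (nhds (X ω))) →
      Tendsto (fun n => Ehat M E (Xn n)) atTop (nhds (Ehat M E X)) := by
    intro Xs X hXs hX hanti hlim
    have hXleXs : ∀ n ω, X ω ≤ Xs n ω := fun n ω => (hanti ω).le_of_tendsto (hlim ω) n
    -- choose approximating sequences for each Xs n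
    choose Y hYM hYanti hYlim using fun n => (hXs n).2
    have hYge : ∀ i k ω, Xs i ω ≤ Y i k ω :=
      fun i k ω => (hYanti i ω).le_of_tendsto (hYlim i ω) k
    -- the diagonal sequence
    set Z : ℕ → Ω → ℝ := fun k => minUpTo (fun i k => Y i k) k k with hZdef
    have hZM : ∀ k, Z k ∈ M := fun k => minUpTo_mem hmin _ k (fun i => hYM i k) k
    have hZgeXs : ∀ k ω, Xs k ω ≤ Z k ω := by
      intro k ω
      refine le_minUpTo _ k k _ ω fun i hi => ?_
      exact ((hanti ω) hi).trans (hYge i k ω)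
    have hZgeX : ∀ k ω, X ω ≤ Z k ω := fun k ω => (hXleXs k ω).trans (hZgeXs k ω)
    have hZanti : ∀ ω, Antitone fun k => Z k ω := by
      intro ω
      refine antitone_nat_of_succ_le fun k => ?_
      refine le_minUpTo _ k k _ ω fun i hi => ?_
      exact (minUpTo_le _ (k+1) (k+1) i (hi.trans (Nat.le_succ k)) ω).trans
        ((hYanti i ω) (Nat.le_succ k))
    have hZlim : ∀ ω, Tendsto (fun k => Z k ω) atTop (nhds (X ω)) := by
      intro ω
      have bdd : BddBelow (Set.range fun k => Z k ω) := by
        refine ⟨X ω, ?_⟩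
        rintro y ⟨k, rfl⟩
        exact hZgeX k ω
      have htend : Tendsto (fun k => Z k ω) atTop (nhds (⨅ k, Z k ω)) :=
        tendsto_atTop_ciInf (hZanti ω) bdd
      have hL1 : X ω ≤ ⨅ k, Z k ω := le_ciInf fun k => hZgeX k ω
      have hL2 : (⨅ k, Z k ω) ≤ X ω := by
        refine ge_of_tendsto' (hlim ω) fun i => ?_
        refine ge_of_tendsto (hYlim i ω) ?_
        filter_upwards [eventually_ge_atTop i] with k hk
        exact (ciInf_le bdd k).trans (minUpTo_le _ k k i hk ω)
      rwa [le_antisymm hL2 hL1] at htend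
    -- conclude
    obtain ⟨heq, -⟩ := hkey X hX Z hZM hZanti hZlim
    have hEXsle : ∀ k, Ehat M E (Xs k) ≤ E (Z k) := fun k =>
      csInf_le (hbddS _ (hXs k).1) ⟨Z k, ⟨hZM k, hZgeXs k⟩, rfl⟩
    have hEXsge : ∀ k, Ehat M E X ≤ Ehat M E (Xs k) := fun k =>
      hmonoδ X hX (Xs k) (hXs k) (hXleXs k)
    have haE : Antitone fun k => Ehat M E (Xs k) := fun m n h =>
      hmonoδ (Xs n) (hXs n) (Xs m) (hXs m) (fun ω => (hanti ω) h)
    have bddE : BddBelow (Set.range fun k => Ehat M E (Xs k)) := by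
      refine ⟨Ehat M E X, ?_⟩
      rintro y ⟨k, rfl⟩
      exact hEXsge k
    have htend : Tendsto (fun k => Ehat M E (Xs k)) atTop
        (nhds (⨅ k, Ehat M E (Xs k))) := tendsto_atTop_ciInf haE bddE
    have h1 : Ehat M E X ≤ ⨅ k, Ehat M E (Xs k) := le_ciInf hEXsge
    have h2 : (⨅ k, Ehat M E (Xs k)) ≤ Ehat M E X := by
      rw [heq]
      exact ciInf_mono bddE hEXsle
    rwa [le_antisymm h2 h1] at htend
  refine ⟨Ehat M E, hmonoδ, ?_, hcontδ, hext, fun X _ => rfl, ?_, ?_⟩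
  · intro c
    rw [hext _ (hconst c), hcp c]
  · intro X hX Xn hXnM hanti hlim
    exact (hkey X hX Xn hXnM hanti hlim).2
  · intro E' hmono' hcp' hcont' hext' X hX
    obtain ⟨hXb, Xn, hXnM, hanti, hlim⟩ := hX
    have h1 : Tendsto (fun n => E' (Xn n)) atTop (nhds (E' X)) :=
      hcont' Xn X (fun n => hMsub _ (hXnM n)) ⟨hXb, Xn, hXnM, hanti, hlim⟩ hanti hlim
    have h2 : Tendsto (fun n => E' (Xn n)) atTop (nhds (Ehat M E X)) := by
      have := (hkey X ⟨hXb, Xn, hXnM, hanti, hlim⟩ Xn hXnM hanti hlim).2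
      refine this.congr fun n => ?_
      exact (hext' _ (hXnM n)).symm
    exact tendsto_nhds_unique h1 h2
end

section
/- Let I be a nonempty index set, S a measurable space, and for each finite nonempty J ⊆ I let M_J ⊆ L^∞(S^J) be a linear subspace containing 1 with M_K ∘ pr_{JK} ⊆ M_J for K ⊆ J. Let (E_J) be a consistent family of pre-expectations, i.e. E_K(f) = E_J(f ∘ pr_{JK}) for f ∈ M_K, K ⊆ J. Then there exists an expectation Ê on L^∞(S^I, B^I) with Ê(f ∘ pr_J) = E_J(f) for all finite J and f ∈ M_J; and Ê may be chosen convex (resp. sublinear) if all E_J are convex (resp. sublinear). -/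
open Filter

/-- Projection `pr_{JK} : S^J → S^K` for `K ⊆ J`. -/
def projJK {I S : Type*} {J K : Finset I} (h : K ⊆ J) (x : ↥J → S) (k : ↥K) : S :=
  x ⟨k.1, h k.2⟩

/-- Projection `pr_J : S^I → S^J`. -/
def projJ {I S : Type*} (J : Finset I) (x : I → S) (j : ↥J) : S := x j.1

def IsLinftyF {Ω : Type*} [MeasurableSpace Ω] (X : Ω → ℝ) : Prop :=
  Measurable X ∧ ∃ C : ℝ, ∀ ω, |X ω| ≤ C

/-!
Put `Ê X = inf {E_J f : J finite, f ∈ M_J, X ≤ f ∘ pr_J}`. By consistency, `E_J f` depends only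
on the cylinder function `f ∘ pr_J`: two representations can be compared on `S^{J ∪ K}`, where
monotonicity of `E_{J ∪ K}` applies because `pr_{J ∪ K}` is onto. So the `E_J` glue to a
monotone, constant-preserving functional on the space of cylinder functions, and `Ê` is its
maximal extension, which restricts to `E` on cylinder functions by monotonicity of `E`. Since
cylinder functions are closed under linear combinations and the infimum of `s • A + u • B`
(`s, u ≥ 0`) is `s inf A + u inf B`, convexity and sublinearity pass from `E` to `Ê`.
-/

open Set
open scoped Pointwise

section MaxExtension

variable {Ω : Type*}

structure IsPreExpectation (M : Set (Ω → ℝ)) (E : (Ω → ℝ) → ℝ) : Prop where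
  const_mem : ∀ c : ℝ, (fun _ => c) ∈ M
  mono : ∀ f ∈ M, ∀ g ∈ M, f ≤ g → E f ≤ E g
  map_const : ∀ c : ℝ, E (fun _ => c) = c

noncomputable def maxExtension (M : Set (Ω → ℝ)) (E : (Ω → ℝ) → ℝ) (X : Ω → ℝ) : ℝ :=
  sInf (E '' {f ∈ M | X ≤ f})

lemma bddBelow_range_smul_add {X Y : Ω → ℝ} {s u : ℝ} (hs : 0 ≤ s) (hu : 0 ≤ u)
    (hX : BddBelow (range X)) (hY : BddBelow (range Y)) : BddBelow (range (s • X + u • Y)) := by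
  obtain ⟨a, ha⟩ := hX
  obtain ⟨b, hb⟩ := hY
  refine ⟨s * a + u * b, forall_mem_range.2 fun ω => ?_⟩
  have hXω := ha (mem_range_self ω)
  have hYω := hb (mem_range_self ω)
  simp only [Pi.add_apply, Pi.smul_apply, smul_eq_mul]
  gcongr

lemma bddBelow_range_smul {X : Ω → ℝ} {c : ℝ} (hc : 0 ≤ c) (hX : BddBelow (range X)) :
    BddBelow (range (c • X)) := by
  rw [show range (c • X) = c • range X from Set.range_smul c X]
  exact hX.smul_of_nonneg hc

lemma bddAbove_range_smul {X : Ω → ℝ} {c : ℝ} (hc : 0 ≤ c) (hX : BddAbove (range X)) :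
    BddAbove (range (c • X)) := by
  rw [show range (c • X) = c • range X from Set.range_smul c X]
  exact hX.smul_of_nonneg hc

namespace IsPreExpectation

variable {M : Set (Ω → ℝ)} {E : (Ω → ℝ) → ℝ} {X Y : Ω → ℝ}

lemma nonempty_image_dominators (hE : IsPreExpectation M E) (hX : BddAbove (range X)) :
    (E '' {f ∈ M | X ≤ f}).Nonempty := by
  obtain ⟨C, hC⟩ := hX
  exact ⟨_, _, ⟨hE.const_mem C, fun ω => hC (mem_range_self ω)⟩, rfl⟩

lemma bddBelow_image_dominators (hE : IsPreExpectation M E) (hX : BddBelow (range X)) :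
    BddBelow (E '' {f ∈ M | X ≤ f}) := by
  obtain ⟨b, hb⟩ := hX
  refine ⟨b, ?_⟩
  rintro _ ⟨f, ⟨hf, hXf⟩, rfl⟩
  calc b = E (fun _ => b) := (hE.map_const b).symm
    _ ≤ E f := hE.mono _ (hE.const_mem b) f hf fun ω => (hb (mem_range_self ω)).trans (hXf ω)

lemma maxExtension_eq (hE : IsPreExpectation M E) {f : Ω → ℝ} (hf : f ∈ M) :
    maxExtension M E f = E f := by
  refine IsLeast.csInf_eq ⟨⟨f, ⟨hf, le_rfl⟩, rfl⟩, ?_⟩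
  rintro _ ⟨g, ⟨hg, hfg⟩, rfl⟩
  exact hE.mono f hf g hg hfg

lemma maxExtension_const (hE : IsPreExpectation M E) (c : ℝ) :
    maxExtension M E (fun _ => c) = c :=
  (hE.maxExtension_eq (hE.const_mem c)).trans (hE.map_const c)

lemma maxExtension_mono (hE : IsPreExpectation M E) (hX : BddBelow (range X))
    (hY : BddAbove (range Y)) (hXY : X ≤ Y) : maxExtension M E X ≤ maxExtension M E Y :=
  csInf_le_csInf (hE.bddBelow_image_dominators hX) (hE.nonempty_image_dominators hY)
    (image_mono fun _ ⟨hf, hYf⟩ => ⟨hf, hXY.trans hYf⟩)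

lemma maxExtension_le_csInf (hE : IsPreExpectation M E) (hX : BddBelow (range X)) {T : Set ℝ}
    (hT : T.Nonempty) (h : ∀ t ∈ T, ∃ f ∈ M, X ≤ f ∧ E f ≤ t) : maxExtension M E X ≤ sInf T := by
  refine le_csInf hT fun t ht => ?_
  obtain ⟨f, hf, hXf, hft⟩ := h t ht
  exact (csInf_le (hE.bddBelow_image_dominators hX) ⟨f, ⟨hf, hXf⟩, rfl⟩).trans hft

lemma maxExtension_smul_add_le (hE : IsPreExpectation M E) {s u : ℝ} (hs : 0 ≤ s) (hu : 0 ≤ u)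
    (hM : ∀ f ∈ M, ∀ g ∈ M, s • f + u • g ∈ M)
    (hEsu : ∀ f ∈ M, ∀ g ∈ M, E (s • f + u • g) ≤ s * E f + u * E g)
    (hXb : BddBelow (range X)) (hXa : BddAbove (range X))
    (hYb : BddBelow (range Y)) (hYa : BddAbove (range Y)) :
    maxExtension M E (s • X + u • Y) ≤ s * maxExtension M E X + u * maxExtension M E Y := by
  have hDX := hE.nonempty_image_dominators hXa
  have hDY := hE.nonempty_image_dominators hYa
  calc maxExtension M E (s • X + u • Y)
      ≤ sInf (s • E '' {f ∈ M | X ≤ f} + u • E '' {g ∈ M | Y ≤ g}) := by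
        refine hE.maxExtension_le_csInf (bddBelow_range_smul_add hs hu hXb hYb)
          (hDX.smul_set.add hDY.smul_set) ?_
        rintro _ ⟨_, ⟨_, ⟨f, ⟨hf, hXf⟩, rfl⟩, rfl⟩, _, ⟨_, ⟨g, ⟨hg, hYg⟩, rfl⟩, rfl⟩, rfl⟩
        exact ⟨s • f + u • g, hM f hf g hg,
          add_le_add (smul_le_smul_of_nonneg_left hXf hs) (smul_le_smul_of_nonneg_left hYg hu),
          hEsu f hf g hg⟩
    _ = s * maxExtension M E X + u * maxExtension M E Y := by
        rw [csInf_add hDX.smul_set ((hE.bddBelow_image_dominators hXb).smul_of_nonneg hs)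
          hDY.smul_set ((hE.bddBelow_image_dominators hYb).smul_of_nonneg hu),
          Real.sInf_smul_of_nonneg hs, Real.sInf_smul_of_nonneg hu]
        rfl

lemma maxExtension_smul_le (hE : IsPreExpectation M E) {c : ℝ} (hc : 0 ≤ c)
    (hM : ∀ f ∈ M, c • f ∈ M) (hEc : ∀ f ∈ M, E (c • f) ≤ c * E f)
    (hXb : BddBelow (range X)) (hXa : BddAbove (range X)) :
    maxExtension M E (c • X) ≤ c * maxExtension M E X := by
  calc maxExtension M E (c • X) ≤ sInf (c • E '' {f ∈ M | X ≤ f}) := by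
        refine hE.maxExtension_le_csInf (bddBelow_range_smul hc hXb)
          (hE.nonempty_image_dominators hXa).smul_set ?_
        rintro _ ⟨_, ⟨f, ⟨hf, hXf⟩, rfl⟩, rfl⟩
        exact ⟨c • f, hM f hf, smul_le_smul_of_nonneg_left hXf hc, hEc f hf⟩
    _ = c * maxExtension M E X := Real.sInf_smul_of_nonneg hc _

lemma maxExtension_smul (hE : IsPreExpectation M E) (hM : ∀ c : ℝ, 0 ≤ c → ∀ f ∈ M, c • f ∈ M)
    (hEc : ∀ c : ℝ, 0 ≤ c → ∀ f ∈ M, E (c • f) = c * E f) {c : ℝ} (hc : 0 ≤ c)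
    (hXb : BddBelow (range X)) (hXa : BddAbove (range X)) :
    maxExtension M E (c • X) = c * maxExtension M E X := by
  rcases hc.eq_or_lt with rfl | hc
  · rw [zero_smul, zero_mul]
    exact hE.maxExtension_const 0
  refine le_antisymm (hE.maxExtension_smul_le hc.le (hM c hc.le) (fun f hf => (hEc c hc.le f hf).le)
    hXb hXa) ?_
  have hinv : 0 ≤ c⁻¹ := inv_nonneg.2 hc.le
  have h := hE.maxExtension_smul_le hinv (hM _ hinv) (fun f hf => (hEc _ hinv f hf).le)
    (bddBelow_range_smul hc.le hXb) (bddAbove_range_smul hc.le hXa)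
  rw [inv_smul_smul₀ hc.ne'] at h
  rwa [← le_inv_mul_iff₀ hc]

end IsPreExpectation

end MaxExtension

lemma IsLinftyF.bddBelow_range {Ω : Type*} [MeasurableSpace Ω] {X : Ω → ℝ} (hX : IsLinftyF X) :
    BddBelow (range X) := by
  obtain ⟨-, C, hC⟩ := hX
  exact ⟨-C, forall_mem_range.2 fun ω => (abs_le.1 (hC ω)).1⟩

lemma IsLinftyF.bddAbove_range {Ω : Type*} [MeasurableSpace Ω] {X : Ω → ℝ} (hX : IsLinftyF X) :
    BddAbove (range X) := by
  obtain ⟨-, C, hC⟩ := hX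
  exact ⟨C, forall_mem_range.2 fun ω => (abs_le.1 (hC ω)).2⟩

section Cylinder

variable {I S : Type*}

lemma projJ_surjective {J : Finset I} (hJ : J.Nonempty) :
    Function.Surjective (projJ (S := S) J) := by
  classical
  intro y
  obtain ⟨j, hj⟩ := hJ
  refine ⟨fun i => if h : i ∈ J then y ⟨i, h⟩ else y ⟨j, hj⟩, funext fun k => ?_⟩
  simp [projJ, k.2]

structure IsConsistentFamily (M : ∀ J : Finset I, Set ((↥J → S) → ℝ))
    (E : ∀ J : Finset I, ((↥J → S) → ℝ) → ℝ) : Prop where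
  isPreExpectation : ∀ J : Finset I, J.Nonempty → IsPreExpectation (M J) (E J)
  comp_mem : ∀ {J K : Finset I} (h : K ⊆ J), ∀ f ∈ M K, f ∘ projJK h ∈ M J
  consistent : ∀ {J K : Finset I} (h : K ⊆ J), J.Nonempty → K.Nonempty →
    ∀ f ∈ M K, E K f = E J (f ∘ projJK h)

def cylinders (M : ∀ J : Finset I, Set ((↥J → S) → ℝ)) : Set ((I → S) → ℝ) :=
  {F | ∃ J : Finset I, J.Nonempty ∧ ∃ f ∈ M J, F = f ∘ projJ J}

open Classical in
/-- Independent of the chosen representation under consistency: see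
`IsConsistentFamily.cylinderExpectation_eq`. -/
noncomputable def cylinderExpectation (M : ∀ J : Finset I, Set ((↥J → S) → ℝ))
    (E : ∀ J : Finset I, ((↥J → S) → ℝ) → ℝ) (F : (I → S) → ℝ) : ℝ :=
  if h : F ∈ cylinders M then E h.choose h.choose_spec.2.choose else 0

variable {M : ∀ J : Finset I, Set ((↥J → S) → ℝ)} {E : ∀ J : Finset I, ((↥J → S) → ℝ) → ℝ}

lemma smul_mem_cylinders (hsmul : ∀ (J : Finset I) (c : ℝ), ∀ f ∈ M J, (fun x => c * f x) ∈ M J)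
    (c : ℝ) {F : (I → S) → ℝ} (hF : F ∈ cylinders M) : c • F ∈ cylinders M := by
  obtain ⟨J, hJ, f, hf, rfl⟩ := hF
  exact ⟨J, hJ, _, hsmul J c f hf, rfl⟩

namespace IsConsistentFamily

lemma le_of_comp_projJ_le (hME : IsConsistentFamily M E) {J K : Finset I} (hJ : J.Nonempty)
    (hK : K.Nonempty) {f : (↥J → S) → ℝ} (hf : f ∈ M J) {g : (↥K → S) → ℝ} (hg : g ∈ M K)
    (hfg : f ∘ projJ J ≤ g ∘ projJ K) : E J f ≤ E K g := by
  classical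
  have hL : (J ∪ K).Nonempty := hJ.mono Finset.subset_union_left
  rw [hME.consistent Finset.subset_union_left hL hJ f hf,
    hME.consistent Finset.subset_union_right hL hK g hg]
  refine (hME.isPreExpectation _ hL).mono _ (hME.comp_mem _ f hf) _ (hME.comp_mem _ g hg)
    fun y => ?_
  obtain ⟨x, rfl⟩ := projJ_surjective hL y
  exact hfg x

lemma cylinderExpectation_eq (hME : IsConsistentFamily M E) {J : Finset I} (hJ : J.Nonempty)
    {f : (↥J → S) → ℝ} (hf : f ∈ M J) {F : (I → S) → ℝ} (hF : F = f ∘ projJ J) :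
    cylinderExpectation M E F = E J f := by
  have hFc : F ∈ cylinders M := ⟨J, hJ, f, hf, hF⟩
  have hK := hFc.choose_spec.1
  obtain ⟨hg, hFg⟩ := hFc.choose_spec.2.choose_spec
  rw [cylinderExpectation, dif_pos hFc]
  exact le_antisymm (hME.le_of_comp_projJ_le hK hJ hg hf (hFg.symm.trans hF).le)
    (hME.le_of_comp_projJ_le hJ hK hf hg (hF.symm.trans hFg).le)

lemma exists_common_index (hME : IsConsistentFamily M E) {F G : (I → S) → ℝ}
    (hF : F ∈ cylinders M) (hG : G ∈ cylinders M) :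
    ∃ L : Finset I, L.Nonempty ∧ ∃ f ∈ M L, ∃ g ∈ M L, F = f ∘ projJ L ∧ G = g ∘ projJ L := by
  classical
  obtain ⟨J, hJ, f, hf, rfl⟩ := hF
  obtain ⟨K, -, g, hg, rfl⟩ := hG
  exact ⟨J ∪ K, hJ.mono Finset.subset_union_left, _, hME.comp_mem Finset.subset_union_left f hf,
    _, hME.comp_mem Finset.subset_union_right g hg, rfl, rfl⟩

lemma isPreExpectation_cylinders [Nonempty I] (hME : IsConsistentFamily M E) :
    IsPreExpectation (cylinders M) (cylinderExpectation M E) := by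
  obtain ⟨i⟩ := ‹Nonempty I›
  have hi : ({i} : Finset I).Nonempty := Finset.singleton_nonempty i
  have hconst (c : ℝ) : (fun _ : ↥({i} : Finset I) → S => c) ∈ M {i} :=
    (hME.isPreExpectation _ hi).const_mem c
  refine ⟨fun c => ⟨{i}, hi, _, hconst c, rfl⟩, ?_, fun c => ?_⟩
  · rintro _ ⟨J, hJ, f, hf, rfl⟩ _ ⟨K, hK, g, hg, rfl⟩ hfg
    rw [hME.cylinderExpectation_eq hJ hf rfl, hME.cylinderExpectation_eq hK hg rfl]
    exact hME.le_of_comp_projJ_le hJ hK hf hg hfg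
  · exact (hME.cylinderExpectation_eq hi (hconst c) (F := fun _ => c) rfl).trans
      ((hME.isPreExpectation _ hi).map_const c)

lemma smul_add_mem_cylinders (hME : IsConsistentFamily M E)
    (hadd : ∀ J : Finset I, ∀ f ∈ M J, ∀ g ∈ M J, (fun x => f x + g x) ∈ M J)
    (hsmul : ∀ (J : Finset I) (c : ℝ), ∀ f ∈ M J, (fun x => c * f x) ∈ M J) (s u : ℝ)
    {F G : (I → S) → ℝ} (hF : F ∈ cylinders M) (hG : G ∈ cylinders M) :
    s • F + u • G ∈ cylinders M := by
  obtain ⟨L, hL, f, hf, g, hg, rfl, rfl⟩ := hME.exists_common_index hF hG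
  exact ⟨L, hL, _, hadd L _ (hsmul L s f hf) _ (hsmul L u g hg), rfl⟩

lemma cylinderExpectation_smul_add_le (hME : IsConsistentFamily M E)
    (hadd : ∀ J : Finset I, ∀ f ∈ M J, ∀ g ∈ M J, (fun x => f x + g x) ∈ M J)
    (hsmul : ∀ (J : Finset I) (c : ℝ), ∀ f ∈ M J, (fun x => c * f x) ∈ M J) {s u : ℝ}
    (h : ∀ J : Finset I, J.Nonempty → ∀ f ∈ M J, ∀ g ∈ M J,
      E J (fun x => s * f x + u * g x) ≤ s * E J f + u * E J g)
    {F G : (I → S) → ℝ} (hF : F ∈ cylinders M) (hG : G ∈ cylinders M) :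
    cylinderExpectation M E (s • F + u • G) ≤
      s * cylinderExpectation M E F + u * cylinderExpectation M E G := by
  obtain ⟨L, hL, f, hf, g, hg, rfl, rfl⟩ := hME.exists_common_index hF hG
  rw [hME.cylinderExpectation_eq hL (hadd L _ (hsmul L s f hf) _ (hsmul L u g hg))
    (F := s • (f ∘ projJ L) + u • (g ∘ projJ L)) rfl,
    hME.cylinderExpectation_eq hL hf rfl, hME.cylinderExpectation_eq hL hg rfl]
  exact h L hL f hf g hg

lemma cylinderExpectation_smul (hME : IsConsistentFamily M E)
    (hsmul : ∀ (J : Finset I) (c : ℝ), ∀ f ∈ M J, (fun x => c * f x) ∈ M J) {c : ℝ}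
    (h : ∀ J : Finset I, J.Nonempty → ∀ f ∈ M J, E J (fun x => c * f x) = c * E J f)
    {F : (I → S) → ℝ} (hF : F ∈ cylinders M) :
    cylinderExpectation M E (c • F) = c * cylinderExpectation M E F := by
  obtain ⟨J, hJ, f, hf, rfl⟩ := hF
  rw [hME.cylinderExpectation_eq hJ (hsmul J c f hf) (F := c • (f ∘ projJ J)) rfl,
    hME.cylinderExpectation_eq hJ hf rfl]
  exact h J hJ f hf

lemma maxExtension_cylinders_smul_add_le [Nonempty I] [MeasurableSpace S]
    (hME : IsConsistentFamily M E)
    (hadd : ∀ J : Finset I, ∀ f ∈ M J, ∀ g ∈ M J, (fun x => f x + g x) ∈ M J)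
    (hsmul : ∀ (J : Finset I) (c : ℝ), ∀ f ∈ M J, (fun x => c * f x) ∈ M J) {s u : ℝ}
    (hs : 0 ≤ s) (hu : 0 ≤ u)
    (h : ∀ J : Finset I, J.Nonempty → ∀ f ∈ M J, ∀ g ∈ M J,
      E J (fun x => s * f x + u * g x) ≤ s * E J f + u * E J g)
    {X Y : (I → S) → ℝ} (hX : IsLinftyF X) (hY : IsLinftyF Y) :
    maxExtension (cylinders M) (cylinderExpectation M E) (s • X + u • Y) ≤
      s * maxExtension (cylinders M) (cylinderExpectation M E) X +
        u * maxExtension (cylinders M) (cylinderExpectation M E) Y :=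
  hME.isPreExpectation_cylinders.maxExtension_smul_add_le hs hu
    (fun _ hF _ hG => hME.smul_add_mem_cylinders hadd hsmul s u hF hG)
    (fun _ hF _ hG => hME.cylinderExpectation_smul_add_le hadd hsmul h hF hG)
    hX.bddBelow_range hX.bddAbove_range hY.bddBelow_range hY.bddAbove_range

end IsConsistentFamily

end Cylinder

theorem stmt15_general {I S : Type*} [Nonempty I] [MeasurableSpace S]
    (M : ∀ J : Finset I, Set ((↥J → S) → ℝ))
    -- each `M_J` is a linear subspace of `L^∞(S^J)` containing `1`
    (hconst : ∀ (J : Finset I) (c : ℝ), (fun _ : ↥J → S => c) ∈ M J)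
    (hadd : ∀ J : Finset I, ∀ f ∈ M J, ∀ g ∈ M J, (fun x => f x + g x) ∈ M J)
    (hsmul : ∀ (J : Finset I) (c : ℝ), ∀ f ∈ M J, (fun x => c * f x) ∈ M J)
    -- compatibility `M_K ∘ pr_{JK} ⊆ M_J`
    (hcomp : ∀ (J K : Finset I) (h : K ⊆ J), ∀ f ∈ M K, f ∘ projJK (S := S) h ∈ M J)
    -- a consistent family of pre-expectations
    (E : ∀ J : Finset I, ((↥J → S) → ℝ) → ℝ)
    (hmono : ∀ J : Finset I, J.Nonempty → ∀ f ∈ M J, ∀ g ∈ M J,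
      (∀ x, f x ≤ g x) → E J f ≤ E J g)
    (hcp : ∀ J : Finset I, J.Nonempty → ∀ c : ℝ, E J (fun _ : ↥J → S => c) = c)
    (hcons : ∀ (J K : Finset I) (h : K ⊆ J), J.Nonempty → K.Nonempty →
      ∀ f ∈ M K, E K f = E J (f ∘ projJK (S := S) h)) :
    ∃ Ehat : ((I → S) → ℝ) → ℝ,
      -- `Ê` is an expectation on `L^∞(S^I, B^I)` ...
      (∀ X Y : (I → S) → ℝ, IsLinftyF X → IsLinftyF Y → (∀ x, X x ≤ Y x) →
        Ehat X ≤ Ehat Y) ∧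
      (∀ c : ℝ, Ehat (fun _ : I → S => c) = c) ∧
      -- ... extending the family `(E_J)`
      (∀ J : Finset I, J.Nonempty → ∀ f ∈ M J, Ehat (f ∘ projJ J) = E J f) ∧
      -- convexity is preserved
      ((∀ J : Finset I, J.Nonempty → ∀ f ∈ M J, ∀ g ∈ M J, ∀ t ∈ Set.Icc (0:ℝ) 1,
          E J (fun x => t * f x + (1 - t) * g x) ≤ t * E J f + (1 - t) * E J g) →
        ∀ X Y : (I → S) → ℝ, IsLinftyF X → IsLinftyF Y → ∀ t ∈ Set.Icc (0:ℝ) 1,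
          Ehat (fun x => t * X x + (1 - t) * Y x) ≤ t * Ehat X + (1 - t) * Ehat Y) ∧
      -- sublinearity is preserved
      ((∀ J : Finset I, J.Nonempty →
          (∀ f ∈ M J, ∀ g ∈ M J, E J (fun x => f x + g x) ≤ E J f + E J g) ∧
          (∀ c : ℝ, 0 ≤ c → ∀ f ∈ M J, E J (fun x => c * f x) = c * E J f)) →
        (∀ X Y : (I → S) → ℝ, IsLinftyF X → IsLinftyF Y →
          Ehat (fun x => X x + Y x) ≤ Ehat X + Ehat Y) ∧
        (∀ c : ℝ, 0 ≤ c → ∀ X : (I → S) → ℝ, IsLinftyF X →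
          Ehat (fun x => c * X x) = c * Ehat X)) := by
  have hME : IsConsistentFamily M E :=
    ⟨fun J hJ => ⟨hconst J, hmono J hJ, hcp J hJ⟩, fun h => hcomp _ _ h, fun h => hcons _ _ h⟩
  have hE := hME.isPreExpectation_cylinders
  refine ⟨maxExtension (cylinders M) (cylinderExpectation M E),
    fun X Y hX hY hXY => hE.maxExtension_mono hX.bddBelow_range hY.bddAbove_range hXY,
    hE.maxExtension_const, fun J hJ f hf => ?_, fun hconv X Y hX hY t ht => ?_, fun hsub => ?_⟩
  · rw [hE.maxExtension_eq ⟨J, hJ, f, hf, rfl⟩, hME.cylinderExpectation_eq hJ hf rfl]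
  · exact hME.maxExtension_cylinders_smul_add_le hadd hsmul ht.1 (sub_nonneg.2 ht.2)
      (fun J hJ f hf g hg => hconv J hJ f hf g hg t ht) hX hY
  refine ⟨fun X Y hX hY => ?_, fun c hc X hX => ?_⟩
  · have h := hME.maxExtension_cylinders_smul_add_le hadd hsmul zero_le_one zero_le_one
      (fun J hJ f hf g hg => by simpa only [one_mul] using (hsub J hJ).1 f hf g hg) hX hY
    rw [one_smul, one_smul, one_mul, one_mul] at h
    exact h
  · exact hE.maxExtension_smul (fun c _ _ hF => smul_mem_cylinders hsmul c hF)
      (fun c hc _ hF => hME.cylinderExpectation_smul hsmul (fun J hJ => (hsub J hJ).2 c hc) hF)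
      hc hX.bddBelow_range hX.bddAbove_range

theorem stmt15 {I S : Type*} [Nonempty I] [MeasurableSpace S]
    (M : ∀ J : Finset I, Set ((↥J → S) → ℝ))
    -- each `M_J` is a linear subspace of `L^∞(S^J)` containing `1`
    (hL : ∀ J : Finset I, ∀ f ∈ M J, IsLinftyF f)
    (hconst : ∀ (J : Finset I) (c : ℝ), (fun _ : ↥J → S => c) ∈ M J)
    (hadd : ∀ J : Finset I, ∀ f ∈ M J, ∀ g ∈ M J, (fun x => f x + g x) ∈ M J)
    (hsmul : ∀ (J : Finset I) (c : ℝ), ∀ f ∈ M J, (fun x => c * f x) ∈ M J)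
    -- compatibility `M_K ∘ pr_{JK} ⊆ M_J`
    (hcomp : ∀ (J K : Finset I) (h : K ⊆ J), ∀ f ∈ M K, f ∘ projJK (S := S) h ∈ M J)
    -- a consistent family of pre-expectations
    (E : ∀ J : Finset I, ((↥J → S) → ℝ) → ℝ)
    (hmono : ∀ J : Finset I, J.Nonempty → ∀ f ∈ M J, ∀ g ∈ M J,
      (∀ x, f x ≤ g x) → E J f ≤ E J g)
    (hcp : ∀ J : Finset I, J.Nonempty → ∀ c : ℝ, E J (fun _ : ↥J → S => c) = c)
    (hcons : ∀ (J K : Finset I) (h : K ⊆ J), J.Nonempty → K.Nonempty →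
      ∀ f ∈ M K, E K f = E J (f ∘ projJK (S := S) h)) :
    ∃ Ehat : ((I → S) → ℝ) → ℝ,
      -- `Ê` is an expectation on `L^∞(S^I, B^I)` ...
      (∀ X Y : (I → S) → ℝ, IsLinftyF X → IsLinftyF Y → (∀ x, X x ≤ Y x) →
        Ehat X ≤ Ehat Y) ∧
      (∀ c : ℝ, Ehat (fun _ : I → S => c) = c) ∧
      -- ... extending the family `(E_J)`
      (∀ J : Finset I, J.Nonempty → ∀ f ∈ M J, Ehat (f ∘ projJ J) = E J f) ∧
      -- convexity is preserved
      ((∀ J : Finset I, J.Nonempty → ∀ f ∈ M J, ∀ g ∈ M J, ∀ t ∈ Set.Icc (0:ℝ) 1,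
          E J (fun x => t * f x + (1 - t) * g x) ≤ t * E J f + (1 - t) * E J g) →
        ∀ X Y : (I → S) → ℝ, IsLinftyF X → IsLinftyF Y → ∀ t ∈ Set.Icc (0:ℝ) 1,
          Ehat (fun x => t * X x + (1 - t) * Y x) ≤ t * Ehat X + (1 - t) * Ehat Y) ∧
      -- sublinearity is preserved
      ((∀ J : Finset I, J.Nonempty →
          (∀ f ∈ M J, ∀ g ∈ M J, E J (fun x => f x + g x) ≤ E J f + E J g) ∧
          (∀ c : ℝ, 0 ≤ c → ∀ f ∈ M J, E J (fun x => c * f x) = c * E J f)) →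
        (∀ X Y : (I → S) → ℝ, IsLinftyF X → IsLinftyF Y →
          Ehat (fun x => X x + Y x) ≤ Ehat X + Ehat Y) ∧
        (∀ c : ℝ, 0 ≤ c → ∀ X : (I → S) → ℝ, IsLinftyF X →
          Ehat (fun x => c * X x) = c * Ehat X)) :=
  stmt15_general M hconst hadd hsmul hcomp E hmono hcp hcons
end

section
/- For each finite nonempty J ⊆ I let E_J : M_J → ℝ be a sublinear pre-expectation and Q_J := {μ_J ∈ M_J' : μ_J f ≤ E_J(f) for all f ∈ M_J}. Then the family (E_J) is consistent (E_K(f) = E_J(f∘pr_{JK})) if and only if the family (Q_J) is consistent (Q_J ∘ pr_{JK}^{-1} = Q_K for K ⊆ J). -/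
open Filter

/-- Composition with `pr_{JK}` as a linear map `M_K →ₗ M_J`. -/
def compLM {I S : Type*} {J K : Finset I} (h : K ⊆ J)
    (MJ : Submodule ℝ ((↥J → S) → ℝ)) (MK : Submodule ℝ ((↥K → S) → ℝ))
    (hcomp : ∀ f ∈ MK, f ∘ projJK (S := S) h ∈ MJ) : MK →ₗ[ℝ] MJ where
  toFun f := ⟨(f : (↥K → S) → ℝ) ∘ projJK (S := S) h, hcomp f f.2⟩
  map_add' f g := rfl
  map_smul' c f := rfl

/-- `Q_J = { μ_J ∈ M_J' : μ_J f ≤ E_J(f) for all f ∈ M_J }`. -/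
def QsetOf {β : Type*} (M : Submodule ℝ (β → ℝ))
    (E : (β → ℝ) → ℝ) : Set (M →ₗ[ℝ] ℝ) :=
  {μ | (∃ C : ℝ, ∀ f : M, |μ f| ≤ C * ⨆ x, |(f : β → ℝ) x|) ∧
    ∀ f : M, μ f ≤ E (f : β → ℝ)}

/-!
By Hahn–Banach, a functional on `W` dominated by `p ∘ c`, for `p` sublinear on `V` and `c`
linear, is the pullback along `c` of a functional dominated by `p`; in particular every sublinear
functional is the pointwise maximum of the linear functionals it dominates, each maximum being
attained. Hence, for sublinear `p` and `q`, the identity `q = p ∘ c` holds iff pulling back the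
functionals dominated by `p` along `c` gives exactly those dominated by `q`. With
`c = (· ∘ pr_{JK})` this is the theorem, because a functional dominated by a monotone,
constant-preserving `E_J` is automatically bounded for the sup norm, so `Q_J` is just the set of
functionals dominated by `E_J`.
-/

structure IsSublinear {V : Type*} [AddCommGroup V] [Module ℝ V] (p : V → ℝ) : Prop where
  smul_of_pos : ∀ c : ℝ, 0 < c → ∀ x, p (c • x) = c * p x
  add_le : ∀ x y, p (x + y) ≤ p x + p y

namespace IsSublinear

variable {V W : Type*} [AddCommGroup V] [Module ℝ V] [AddCommGroup W] [Module ℝ W]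
  {p : V → ℝ}

theorem map_zero (hp : IsSublinear p) : p 0 = 0 := by
  have h := hp.smul_of_pos 2 two_pos 0
  rw [smul_zero] at h
  linarith

theorem mul_le_smul (hp : IsSublinear p) (t : ℝ) (x : V) : t * p x ≤ p (t • x) := by
  rcases le_or_gt t 0 with ht | ht
  · -- `0 = p (t • x + (-t) • x) ≤ p (t • x) + (-t) * p x`
    have h := hp.add_le (t • x) ((-t) • x)
    rw [← add_smul, add_neg_cancel, zero_smul, hp.map_zero] at h
    rcases ht.lt_or_eq with ht | rfl
    · rw [hp.smul_of_pos (-t) (neg_pos.2 ht)] at h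
      linarith
    · simp [hp.map_zero]
  · exact (hp.smul_of_pos t ht x).ge

theorem exists_comp_eq_of_le (hp : IsSublinear p) (c : W →ₗ[ℝ] V) (ν : W →ₗ[ℝ] ℝ)
    (hν : ∀ w, ν w ≤ p (c w)) :
    ∃ μ : V →ₗ[ℝ] ℝ, (∀ x, μ x ≤ p x) ∧ μ ∘ₗ c = ν := by
  have hker : LinearMap.ker c ≤ LinearMap.ker ν := by
    intro w hw
    rw [LinearMap.mem_ker] at hw ⊢
    have h₁ := hν w
    have h₂ := hν (-w)
    rw [map_neg, map_neg, hw, neg_zero, hp.map_zero] at h₂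
    rw [hw, hp.map_zero] at h₁
    linarith
  let f : V →ₗ.[ℝ] ℝ :=
    ⟨LinearMap.range c, (LinearMap.ker c).liftQ ν hker ∘ₗ c.quotKerEquivRange.symm.toLinearMap⟩
  have hf : ∀ w, f ⟨c w, LinearMap.mem_range_self c w⟩ = ν w := fun w => by
    simp [f, LinearMap.quotKerEquivRange_symm_apply_image]
  obtain ⟨μ, hμf, hμp⟩ := exists_extension_of_le_sublinear f p hp.smul_of_pos hp.add_le <| by
    rintro ⟨_, w, rfl⟩
    exact (hf w).trans_le (hν w)
  refine ⟨μ, hμp, LinearMap.ext fun w => ?_⟩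
  exact (hμf ⟨c w, LinearMap.mem_range_self c w⟩).trans (hf w)

theorem exists_le_apply_eq (hp : IsSublinear p) (x : V) : ∃ μ : V →ₗ[ℝ] ℝ, (∀ y, μ y ≤ p y) ∧ μ x = p x := by
  obtain ⟨μ, hμp, hμx⟩ := hp.exists_comp_eq_of_le (LinearMap.toSpanSingleton ℝ V x)
    (LinearMap.toSpanSingleton ℝ ℝ (p x)) (hp.mul_le_smul · x)
  refine ⟨μ, hμp, ?_⟩
  simpa using LinearMap.congr_fun hμx 1

end IsSublinear

section Pullback

variable {V W : Type*} [AddCommGroup V] [Module ℝ V] [AddCommGroup W] [Module ℝ W]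
  {p : V → ℝ} {q : W → ℝ}

theorem comp_image_setOf_le_eq_iff (hp : IsSublinear p) (hq : IsSublinear q)
    (c : W →ₗ[ℝ] V) :
    (∀ w, q w = p (c w)) ↔
      (fun μ : V →ₗ[ℝ] ℝ => μ ∘ₗ c) '' {μ | ∀ x, μ x ≤ p x} = {ν | ∀ w, ν w ≤ q w} := by
  constructor
  · intro hqp
    ext ν
    constructor
    · rintro ⟨μ, hμ, rfl⟩ w
      exact (hμ (c w)).trans_eq (hqp w).symm
    · intro hν
      exact hp.exists_comp_eq_of_le c ν fun w => (hν w).trans_eq (hqp w)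
  · intro himage w
    apply le_antisymm
    · obtain ⟨ν, hνq, hνw⟩ := hq.exists_le_apply_eq w
      obtain ⟨μ, hμp, rfl⟩ := himage.ge hνq
      exact hνw ▸ hμp (c w)
    · obtain ⟨μ, hμp, hμcw⟩ := hp.exists_le_apply_eq (c w)
      exact hμcw ▸ himage.le ⟨μ, hμp, rfl⟩ w

end Pullback

section Expectation

variable {β : Type*} {M : Submodule ℝ (β → ℝ)} {E : (β → ℝ) → ℝ}

theorem isSublinear_restrict
    (hsubadd : ∀ f ∈ M, ∀ g ∈ M, E (fun x => f x + g x) ≤ E f + E g)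
    (hposhom : ∀ c : ℝ, 0 ≤ c → ∀ f ∈ M, E (fun x => c * f x) = c * E f) :
    IsSublinear fun f : M => E f where
  smul_of_pos c hc f := hposhom c hc.le f f.2
  add_le f g := hsubadd f f.2 g g.2

theorem abs_le_iSup_abs_of_le (hbdd : ∀ f ∈ M, ∃ C : ℝ, ∀ x, |f x| ≤ C)
    (hone : (fun _ : β => (1 : ℝ)) ∈ M)
    (hmono : ∀ f ∈ M, ∀ g ∈ M, (∀ x, f x ≤ g x) → E f ≤ E g)
    (hcp : ∀ c : ℝ, E (fun _ => c) = c)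
    {μ : M →ₗ[ℝ] ℝ} (hμ : ∀ f : M, μ f ≤ E f) (f : M) :
    |μ f| ≤ ⨆ x, |(f : β → ℝ) x| := by
  set s := ⨆ x, |(f : β → ℝ) x|
  have hs : ∀ x, |(f : β → ℝ) x| ≤ s := by
    obtain ⟨C, hC⟩ := hbdd f f.2
    exact le_ciSup ⟨C, by rintro _ ⟨x, rfl⟩; exact hC x⟩
  have hconst : (fun _ : β => s) ∈ M := by
    simpa [Pi.smul_def] using M.smul_mem s hone
  have hE : ∀ g : M, (∀ x, (g : β → ℝ) x ≤ s) → μ g ≤ s := fun g hg =>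
    (hμ g).trans ((hmono g g.2 _ hconst hg).trans_eq (hcp s))
  rw [abs_le]
  constructor
  · have := hE (-f) fun x => (neg_le_abs _).trans (hs x)
    rw [map_neg] at this
    linarith
  · exact hE f fun x => (le_abs_self _).trans (hs x)

theorem QsetOf_eq_setOf_le (hbdd : ∀ f ∈ M, ∃ C : ℝ, ∀ x, |f x| ≤ C)
    (hone : (fun _ : β => (1 : ℝ)) ∈ M)
    (hmono : ∀ f ∈ M, ∀ g ∈ M, (∀ x, f x ≤ g x) → E f ≤ E g)
    (hcp : ∀ c : ℝ, E (fun _ => c) = c) :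
    QsetOf M E = {μ | ∀ f : M, μ f ≤ E f} := by
  ext μ
  refine ⟨And.right, fun hμ => ⟨⟨1, fun f => ?_⟩, hμ⟩⟩
  rw [one_mul]
  exact abs_le_iSup_abs_of_le hbdd hone hmono hcp hμ f

end Expectation

theorem stmt16_general {I S : Type*} [MeasurableSpace S]
    (M : ∀ J : Finset I, Submodule ℝ ((↥J → S) → ℝ))
    (hL : ∀ J : Finset I, ∀ f ∈ M J, IsLinftyF f)
    (hone : ∀ J : Finset I, (fun _ : ↥J → S => (1:ℝ)) ∈ M J)
    (hcomp : ∀ (J K : Finset I) (h : K ⊆ J), ∀ f ∈ M K,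
      f ∘ projJK (S := S) h ∈ M J)
    (E : ∀ J : Finset I, ((↥J → S) → ℝ) → ℝ)
    -- sublinear pre-expectations
    (hmono : ∀ J : Finset I, J.Nonempty → ∀ f ∈ M J, ∀ g ∈ M J,
      (∀ x, f x ≤ g x) → E J f ≤ E J g)
    (hcp : ∀ J : Finset I, J.Nonempty → ∀ c : ℝ, E J (fun _ : ↥J → S => c) = c)
    (hsubadd : ∀ J : Finset I, J.Nonempty → ∀ f ∈ M J, ∀ g ∈ M J,
      E J (fun x => f x + g x) ≤ E J f + E J g)
    (hposhom : ∀ J : Finset I, J.Nonempty → ∀ c : ℝ, 0 ≤ c → ∀ f ∈ M J,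
      E J (fun x => c * f x) = c * E J f) :
    -- consistency of `(E_J)` is equivalent to consistency of `(Q_J)`
    (∀ (J K : Finset I) (h : K ⊆ J), J.Nonempty → K.Nonempty →
      ∀ f ∈ M K, E K f = E J (f ∘ projJK (S := S) h)) ↔
    (∀ (J K : Finset I) (h : K ⊆ J), J.Nonempty → K.Nonempty →
      (fun μ : M J →ₗ[ℝ] ℝ => μ ∘ₗ compLM h (M J) (M K) (hcomp J K h)) ''
          QsetOf (M J) (E J) = QsetOf (M K) (E K)) := by
  have hQ : ∀ J : Finset I, J.Nonempty → QsetOf (M J) (E J) = {μ | ∀ f : M J, μ f ≤ E J f} :=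
    fun J hJ => QsetOf_eq_setOf_le (fun f hf => (hL J f hf).2) (hone J) (hmono J hJ) (hcp J hJ)
  have hsub : ∀ J : Finset I, J.Nonempty → IsSublinear fun f : M J => E J f :=
    fun J hJ => isSublinear_restrict (hsubadd J hJ) (hposhom J hJ)
  refine forall₄_congr fun J K h hJ => forall_congr' fun hK => ?_
  rw [hQ J hJ, hQ K hK, ← comp_image_setOf_le_eq_iff (hsub J hJ) (hsub K hK)]
  exact ⟨fun hEJK f => hEJK f f.2, fun hEJK f hf => hEJK ⟨f, hf⟩⟩

theorem stmt16 {I S : Type*} [Nonempty I] [MeasurableSpace S]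
    (M : ∀ J : Finset I, Submodule ℝ ((↥J → S) → ℝ))
    (hL : ∀ J : Finset I, ∀ f ∈ M J, IsLinftyF f)
    (hone : ∀ J : Finset I, (fun _ : ↥J → S => (1:ℝ)) ∈ M J)
    (hcomp : ∀ (J K : Finset I) (h : K ⊆ J), ∀ f ∈ M K,
      f ∘ projJK (S := S) h ∈ M J)
    (E : ∀ J : Finset I, ((↥J → S) → ℝ) → ℝ)
    -- sublinear pre-expectations
    (hmono : ∀ J : Finset I, J.Nonempty → ∀ f ∈ M J, ∀ g ∈ M J,
      (∀ x, f x ≤ g x) → E J f ≤ E J g)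
    (hcp : ∀ J : Finset I, J.Nonempty → ∀ c : ℝ, E J (fun _ : ↥J → S => c) = c)
    (hsubadd : ∀ J : Finset I, J.Nonempty → ∀ f ∈ M J, ∀ g ∈ M J,
      E J (fun x => f x + g x) ≤ E J f + E J g)
    (hposhom : ∀ J : Finset I, J.Nonempty → ∀ c : ℝ, 0 ≤ c → ∀ f ∈ M J,
      E J (fun x => c * f x) = c * E J f) :
    -- consistency of `(E_J)` is equivalent to consistency of `(Q_J)`
    (∀ (J K : Finset I) (h : K ⊆ J), J.Nonempty → K.Nonempty →
      ∀ f ∈ M K, E K f = E J (f ∘ projJK (S := S) h)) ↔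
    (∀ (J K : Finset I) (h : K ⊆ J), J.Nonempty → K.Nonempty →
      (fun μ : M J →ₗ[ℝ] ℝ => μ ∘ₗ compLM h (M J) (M K) (hcomp J K h)) ''
          QsetOf (M J) (E J) = QsetOf (M K) (E K)) :=
  stmt16_general M hL hone hcomp E hmono hcp hsubadd hposhom
end

section
/- Let S be a Polish space and E a convex pre-kernel from BUC(S) to C_b(S) which is continuous from above. Then there is exactly one convex pre-kernel Ê from C_b(S) to C_b(S) which is continuous from above and restricts to E on BUC(S). -/
/-!
Approximate `f ∈ C_b(S)` from above by the Lipschitz functions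
`lipSup f n x = sup_y (f y - n d(x, y))`, which lie in `BUC(S)` and decrease pointwise to `f`, and
set `Ê(x, f) = inf_n E(x, lipSup f n)`. Continuity from above of `E` on `BUC(S)` shows that
`lim E(x, ψ n)` is the same for every sequence `ψ n ↓ f` in `BUC(S)`, and all properties of `Ê`,
as well as its uniqueness, follow from this. As an infimum of continuous functions, `x ↦ Ê(x, f)`
is upper semicontinuous; by convexity it is also a supremum of continuous functions, hence
continuous.
-/

open Filter

def IsBddR {S : Type*} (f : S → ℝ) : Prop := ∃ C : ℝ, ∀ x, |f x| ≤ C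

def InBUC {S : Type*} [MetricSpace S] (f : S → ℝ) : Prop :=
  UniformContinuous f ∧ IsBddR f

def InCb {S : Type*} [TopologicalSpace S] (f : S → ℝ) : Prop :=
  Continuous f ∧ IsBddR f

/-- `E` is a convex pre-kernel from `A` to `C_b(S)` which is continuous from
above: each `E(x,·)` is a monotone, constant preserving, convex functional on
`A`, continuous from above on `A`, and `E(·,f) ∈ C_b(S)` for `f ∈ A`. -/
def IsConvexKernelOn {S : Type*} [TopologicalSpace S] (A : Set (S → ℝ))
    (E : S → (S → ℝ) → ℝ) : Prop :=
  (∀ x : S, ∀ f ∈ A, ∀ g ∈ A, (∀ y, f y ≤ g y) → E x f ≤ E x g) ∧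
  (∀ (x : S) (c : ℝ), E x (fun _ => c) = c) ∧
  (∀ f ∈ A, InCb fun x => E x f) ∧
  (∀ x : S, ∀ f ∈ A, ∀ g ∈ A, ∀ t ∈ Set.Icc (0:ℝ) 1,
    E x (fun y => t * f y + (1 - t) * g y) ≤ t * E x f + (1 - t) * E x g) ∧
  (∀ x : S, ∀ (fn : ℕ → S → ℝ) (f : S → ℝ), (∀ n, fn n ∈ A) → f ∈ A →
    (∀ y, Antitone fun n => fn n y) →
    (∀ y, Tendsto (fun n => fn n y) atTop (nhds (f y))) →
    Tendsto (fun n => E x (fn n)) atTop (nhds (E x f)))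

open Topology Set

section LipschitzApproximation

variable {S : Type*} [PseudoMetricSpace S] {f g : S → ℝ} {C : ℝ}

noncomputable def lipSup (f : S → ℝ) (n : ℕ) (x : S) : ℝ := ⨆ y, f y - n * dist x y

theorem bddAbove_range_sub_dist (hC : ∀ y, f y ≤ C) (n : ℕ) (x : S) :
    BddAbove (range fun y => f y - n * dist x y) :=
  ⟨C, forall_mem_range.2 fun y => by
    have := hC y
    have : (0 : ℝ) ≤ n * dist x y := by positivity
    linarith⟩

theorem sub_le_lipSup (hC : ∀ y, f y ≤ C) (n : ℕ) (x y : S) :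
    f y - n * dist x y ≤ lipSup f n x :=
  le_ciSup (bddAbove_range_sub_dist hC n x) y

theorem le_lipSup (hC : ∀ y, f y ≤ C) (n : ℕ) (x : S) : f x ≤ lipSup f n x := by
  simpa using sub_le_lipSup hC n x x

theorem lipSup_le_of_forall {n : ℕ} {x : S} {a : ℝ} (h : ∀ y, f y - n * dist x y ≤ a) :
    lipSup f n x ≤ a :=
  have : Nonempty S := ⟨x⟩
  ciSup_le h

theorem lipSup_le (hC : ∀ y, f y ≤ C) (n : ℕ) (x : S) : lipSup f n x ≤ C :=
  lipSup_le_of_forall fun y => by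
    have := hC y
    have : (0 : ℝ) ≤ n * dist x y := by positivity
    linarith

theorem lipSup_antitone (hC : ∀ y, f y ≤ C) (x : S) : Antitone fun n => lipSup f n x :=
  fun n m hnm => lipSup_le_of_forall fun y => by
    refine le_trans ?_ (sub_le_lipSup hC n x y)
    have : (n : ℝ) ≤ m := by exact_mod_cast hnm
    gcongr

theorem lipSup_mono (hC : ∀ y, g y ≤ C) (hfg : ∀ y, f y ≤ g y) (n : ℕ) (x : S) :
    lipSup f n x ≤ lipSup g n x :=
  lipSup_le_of_forall fun y => le_trans (by gcongr; exact hfg y) (sub_le_lipSup hC n x y)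

theorem lipschitzWith_lipSup (hC : ∀ y, f y ≤ C) (n : ℕ) : LipschitzWith n (lipSup f n) :=
  LipschitzWith.of_le_add_mul n fun x x' => lipSup_le_of_forall fun y => by
    have hy := sub_le_lipSup hC n x' y
    have htri : (n : ℝ) * dist x' y ≤ n * dist x x' + n * dist x y := by
      rw [← mul_add, dist_comm x x']
      exact mul_le_mul_of_nonneg_left (dist_triangle _ _ _) (by positivity)
    push_cast
    linarith

/-- For large `n` only points near `x` compete in the supremum defining `lipSup f n x`. -/
theorem tendsto_lipSup (hC : ∀ y, f y ≤ C) (hf : Continuous f) (x : S) :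
    Tendsto (fun n => lipSup f n x) atTop (𝓝 (f x)) := by
  refine tendsto_order.2 ⟨fun a ha => Eventually.of_forall fun n => ha.trans_le (le_lipSup hC n x),
    fun a ha => ?_⟩
  obtain ⟨b, hxb, hba⟩ := exists_between ha
  obtain ⟨δ, hδ, hball⟩ := Metric.continuousAt_iff.mp hf.continuousAt (b - f x) (by linarith)
  obtain ⟨N, hN⟩ := exists_nat_gt ((C - b) / δ)
  filter_upwards [eventually_ge_atTop N] with n hn
  refine lt_of_le_of_lt (lipSup_le_of_forall fun y => ?_) hba
  rcases lt_or_ge (dist x y) δ with hy | hy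
  · have := (abs_lt.1 (hball (by rwa [dist_comm]))).2
    have : (0 : ℝ) ≤ n * dist x y := by positivity
    linarith
  · have hNn : (C - b) / δ < n := hN.trans_le (by exact_mod_cast hn)
    rw [div_lt_iff₀ hδ] at hNn
    have : (n : ℝ) * δ ≤ n * dist x y := by gcongr
    linarith [hC y]

end LipschitzApproximation

section Bounded

variable {S : Type*} {f g : S → ℝ}

theorem IsBddR.neg (hf : IsBddR f) : IsBddR fun x => -f x :=
  hf.imp fun _ hC x => (abs_neg (f x)).trans_le (hC x)

theorem IsBddR.max (hf : IsBddR f) (hg : IsBddR g) : IsBddR fun x => max (f x) (g x) := by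
  obtain ⟨Cf, hCf⟩ := hf
  obtain ⟨Cg, hCg⟩ := hg
  exact ⟨Max.max Cf Cg, fun x => abs_max_le_max_abs_abs.trans (max_le_max (hCf x) (hCg x))⟩

theorem IsBddR.linearComb (a b : ℝ) (hf : IsBddR f) (hg : IsBddR g) :
    IsBddR fun x => a * f x + b * g x := by
  obtain ⟨Cf, hCf⟩ := hf
  obtain ⟨Cg, hCg⟩ := hg
  refine ⟨|a| * Cf + |b| * Cg, fun x => ?_⟩
  calc |a * f x + b * g x| ≤ |a| * |f x| + |b| * |g x| := by
        rw [← abs_mul, ← abs_mul]; exact abs_add_le _ _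
    _ ≤ |a| * Cf + |b| * Cg := by gcongr <;> [exact hCf x; exact hCg x]

end Bounded

section Cb

variable {S : Type*} [TopologicalSpace S] {f g : S → ℝ}

theorem InCb.neg (hf : InCb f) : InCb fun x => -f x := ⟨hf.1.neg, hf.2.neg⟩

theorem InCb.linearComb (a b : ℝ) (hf : InCb f) (hg : InCb g) :
    InCb fun x => a * f x + b * g x :=
  ⟨(continuous_const.mul hf.1).add (continuous_const.mul hg.1), hf.2.linearComb a b hg.2⟩

end Cb

section BUC

variable {S : Type*} [MetricSpace S] {f g : S → ℝ}

theorem inBUC_const (c : ℝ) : InBUC fun _ : S => c :=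
  ⟨uniformContinuous_const, |c|, fun _ => le_rfl⟩

theorem InBUC.inCb (hf : InBUC f) : InCb f := ⟨hf.1.continuous, hf.2⟩

theorem InBUC.neg (hf : InBUC f) : InBUC fun x => -f x := ⟨hf.1.neg, hf.2.neg⟩

theorem InBUC.max (hf : InBUC f) (hg : InBUC g) : InBUC fun x => max (f x) (g x) :=
  ⟨lipschitzWith_max.uniformContinuous.comp (hf.1.prodMk hg.1), hf.2.max hg.2⟩

theorem InBUC.linearComb (a b : ℝ) (hf : InBUC f) (hg : InBUC g) :
    InBUC fun x => a * f x + b * g x :=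
  ⟨(hf.1.const_mul' a).add (hg.1.const_mul' b), hf.2.linearComb a b hg.2⟩

theorem lipSup_inBUC (hf : IsBddR f) (n : ℕ) : InBUC (lipSup f n) := by
  obtain ⟨C, hC⟩ := hf
  have hCu : ∀ y, f y ≤ C := fun y => le_of_abs_le (hC y)
  exact ⟨(lipschitzWith_lipSup hCu n).uniformContinuous, C, fun x =>
    abs_le.2 ⟨(neg_le_of_abs_le (hC x)).trans (le_lipSup hCu n x), lipSup_le hCu n x⟩⟩

noncomputable def lipInf (f : S → ℝ) (n : ℕ) (x : S) : ℝ := -lipSup (fun y => -f y) n x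

theorem lipInf_inBUC (hf : IsBddR f) (n : ℕ) : InBUC (lipInf f n) :=
  (lipSup_inBUC hf.neg n).neg

theorem lipInf_le (hf : IsBddR f) (n : ℕ) (x : S) : lipInf f n x ≤ f x := by
  obtain ⟨C, hC⟩ := hf.neg
  exact neg_le.1 (le_lipSup (fun y => le_of_abs_le (hC y)) n x)

theorem lipInf_monotone (hf : IsBddR f) (x : S) : Monotone fun n => lipInf f n x := by
  obtain ⟨C, hC⟩ := hf.neg
  exact fun n m hnm => neg_le_neg (lipSup_antitone (fun y => le_of_abs_le (hC y)) x hnm)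

structure BUCDecreasingTo (ψ : ℕ → S → ℝ) (f : S → ℝ) : Prop where
  inBUC : ∀ n, InBUC (ψ n)
  antitone : ∀ y, Antitone fun n => ψ n y
  tendsto : ∀ y, Tendsto (fun n => ψ n y) atTop (𝓝 (f y))

namespace BUCDecreasingTo

variable {ψ φ : ℕ → S → ℝ}

theorem le (hψ : BUCDecreasingTo ψ f) (n : ℕ) (y : S) : f y ≤ ψ n y :=
  (hψ.antitone y).le_of_tendsto (hψ.tendsto y) n

theorem const (hf : InBUC f) : BUCDecreasingTo (fun _ => f) f :=
  ⟨fun _ => hf, fun _ => antitone_const, fun _ => tendsto_const_nhds⟩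

theorem max_right (hψ : BUCDecreasingTo ψ f) (hg : InBUC g) (hfg : ∀ y, f y ≤ g y) :
    BUCDecreasingTo (fun n y => max (ψ n y) (g y)) g where
  inBUC n := (hψ.inBUC n).max hg
  antitone y _ _ hnm := max_le_max (hψ.antitone y hnm) le_rfl
  tendsto y := by simpa [max_eq_right (hfg y)] using (hψ.tendsto y).max (tendsto_const_nhds (x := g y))

theorem linearComb {a b : ℝ} (ha : 0 ≤ a) (hb : 0 ≤ b) (hψ : BUCDecreasingTo ψ f)
    (hφ : BUCDecreasingTo φ g) :
    BUCDecreasingTo (fun n y => a * ψ n y + b * φ n y) (fun y => a * f y + b * g y) where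
  inBUC n := (hψ.inBUC n).linearComb a b (hφ.inBUC n)
  antitone y _ _ hnm := by
    have := hψ.antitone y hnm
    have := hφ.antitone y hnm
    dsimp only
    gcongr
  tendsto y := ((hψ.tendsto y).const_mul a).add ((hφ.tendsto y).const_mul b)

end BUCDecreasingTo

theorem lipSup_bucDecreasingTo (hf : InCb f) : BUCDecreasingTo (lipSup f) f := by
  obtain ⟨hfc, C, hC⟩ := hf
  have hCu : ∀ y, f y ≤ C := fun y => le_of_abs_le (hC y)
  exact ⟨lipSup_inBUC ⟨C, hC⟩, lipSup_antitone hCu, tendsto_lipSup hCu hfc⟩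

theorem bucDecreasingTo_lipSup_diagonal {fn : ℕ → S → ℝ} (hfn : ∀ n, InCb (fn n))
    (hanti : ∀ y, Antitone fun n => fn n y) (hlim : ∀ y, Tendsto (fun n => fn n y) atTop (𝓝 (f y))) :
    BUCDecreasingTo (fun n => lipSup (fn n) n) f := by
  choose C hC using fun n => (hfn n).2
  have hCu : ∀ n y, fn n y ≤ C n := fun n y => le_of_abs_le (hC n y)
  refine ⟨fun n => lipSup_inBUC (hfn n).2 n, fun y n m hnm => ?_, fun y => ?_⟩
  · exact (lipSup_antitone (hCu m) y hnm).trans (lipSup_mono (hCu n) (fun z => hanti z hnm) n y)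
  refine tendsto_order.2 ⟨fun a ha => Eventually.of_forall fun n =>
    ha.trans_le (((hanti y).le_of_tendsto (hlim y) n).trans (le_lipSup (hCu n) n y)), fun a ha => ?_⟩
  obtain ⟨m, hm⟩ := ((hlim y).eventually (gt_mem_nhds ha)).exists
  filter_upwards [eventually_ge_atTop m,
    (tendsto_lipSup (hCu m) (hfn m).1 y).eventually (gt_mem_nhds hm)] with n hmn hlt
  exact (lipSup_mono (hCu m) (fun z => hanti z hmn) n y).trans_lt hlt

end BUC

namespace IsConvexKernelOn

variable {S : Type*} [TopologicalSpace S] {A : Set (S → ℝ)} {E : S → (S → ℝ) → ℝ}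
  {x : S} {f g : S → ℝ}

theorem mono (hE : IsConvexKernelOn A E) (hf : f ∈ A) (hg : g ∈ A) (hfg : ∀ y, f y ≤ g y) :
    E x f ≤ E x g :=
  hE.1 x f hf g hg hfg

theorem apply_const (hE : IsConvexKernelOn A E) (x : S) (c : ℝ) : E x (fun _ => c) = c :=
  hE.2.1 x c

theorem inCb (hE : IsConvexKernelOn A E) (hf : f ∈ A) : InCb fun x => E x f :=
  hE.2.2.1 f hf

theorem apply_convexComb (hE : IsConvexKernelOn A E) (hf : f ∈ A) (hg : g ∈ A) {t : ℝ}
    (ht : t ∈ Icc 0 1) :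
    E x (fun y => t * f y + (1 - t) * g y) ≤ t * E x f + (1 - t) * E x g :=
  hE.2.2.2.1 x f hf g hg t ht

theorem tendsto_apply_of_antitone (hE : IsConvexKernelOn A E) {fn : ℕ → S → ℝ}
    (hfn : ∀ n, fn n ∈ A) (hf : f ∈ A) (hanti : ∀ y, Antitone fun n => fn n y)
    (hlim : ∀ y, Tendsto (fun n => fn n y) atTop (𝓝 (f y))) :
    Tendsto (fun n => E x (fn n)) atTop (𝓝 (E x f)) :=
  hE.2.2.2.2 x fn f hfn hf hanti hlim

theorem const_le_apply (hE : IsConvexKernelOn A E) {c : ℝ} (hc : (fun _ => c) ∈ A) (hf : f ∈ A)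
    (hcf : ∀ y, c ≤ f y) : c ≤ E x f :=
  (hE.apply_const x c).symm.trans_le (hE.mono hc hf hcf)

theorem apply_le_const (hE : IsConvexKernelOn A E) {c : ℝ} (hc : (fun _ => c) ∈ A) (hf : f ∈ A)
    (hfc : ∀ y, f y ≤ c) : E x f ≤ c :=
  (hE.mono hf hc hfc).trans_eq (hE.apply_const x c)

end IsConvexKernelOn

section Extension

variable {S : Type*} [MetricSpace S]

noncomputable def cbExtension (E : S → (S → ℝ) → ℝ) (x : S) (f : S → ℝ) : ℝ :=
  ⨅ n, E x (lipSup f n)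

variable {E : S → (S → ℝ) → ℝ} (hE : IsConvexKernelOn {f | InBUC f} E) {x : S} {f g : S → ℝ}
  {ψ φ : ℕ → S → ℝ}
include hE

theorem bddBelow_range_apply (hψ : ∀ n, InBUC (ψ n)) {c : ℝ} (hc : ∀ n y, c ≤ ψ n y) :
    BddBelow (range fun n => E x (ψ n)) :=
  ⟨c, forall_mem_range.2 fun n => hE.const_le_apply (inBUC_const c) (hψ n) (hc n)⟩

theorem bddAbove_range_apply (hψ : ∀ n, InBUC (ψ n)) {c : ℝ} (hc : ∀ n y, ψ n y ≤ c) :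
    BddAbove (range fun n => E x (ψ n)) :=
  ⟨c, forall_mem_range.2 fun n => hE.apply_le_const (inBUC_const c) (hψ n) (hc n)⟩

theorem BUCDecreasingTo.bddBelow_range_apply (hψ : BUCDecreasingTo ψ f) (hf : IsBddR f) :
    BddBelow (range fun n => E x (ψ n)) := by
  obtain ⟨C, hC⟩ := hf
  exact _root_.bddBelow_range_apply hE hψ.inBUC fun n y =>
    (neg_le_of_abs_le (hC y)).trans (hψ.le n y)

theorem BUCDecreasingTo.tendsto_apply_iInf (hψ : BUCDecreasingTo ψ f) (hf : IsBddR f) :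
    Tendsto (fun n => E x (ψ n)) atTop (𝓝 (⨅ n, E x (ψ n))) :=
  tendsto_atTop_ciInf (fun _ _ hnm => hE.mono (hψ.inBUC _) (hψ.inBUC _) fun y => hψ.antitone y hnm)
    (hψ.bddBelow_range_apply hE hf)

/-- `max (ψ n) (φ m)` decreases to `φ m` as `n → ∞`, since `f ≤ φ m`. -/
theorem BUCDecreasingTo.iInf_apply_le (hψ : BUCDecreasingTo ψ f) (hφ : BUCDecreasingTo φ g)
    (hf : IsBddR f) (hfg : ∀ y, f y ≤ g y) : ⨅ n, E x (ψ n) ≤ ⨅ n, E x (φ n) := by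
  refine le_ciInf fun m => ?_
  have hmax := hψ.max_right (hφ.inBUC m) fun y => (hfg y).trans (hφ.le m y)
  refine ge_of_tendsto (hE.tendsto_apply_of_antitone hmax.inBUC (hφ.inBUC m) hmax.antitone
    hmax.tendsto) (Eventually.of_forall fun n => ?_)
  exact (ciInf_le (hψ.bddBelow_range_apply hE hf) n).trans
    (hE.mono (hψ.inBUC n) (hmax.inBUC n) fun y => le_max_left _ _)

theorem BUCDecreasingTo.tendsto_cbExtension (hψ : BUCDecreasingTo ψ f) (hf : InCb f) :
    Tendsto (fun n => E x (ψ n)) atTop (𝓝 (cbExtension E x f)) := by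
  have hlip := lipSup_bucDecreasingTo hf
  have hinf : ⨅ n, E x (ψ n) = cbExtension E x f :=
    le_antisymm (hψ.iInf_apply_le hE hlip hf.2 fun _ => le_rfl)
      (hlip.iInf_apply_le hE hψ hf.2 fun _ => le_rfl)
  exact hinf ▸ hψ.tendsto_apply_iInf hE hf.2

theorem cbExtension_eq (hf : InBUC f) : cbExtension E x f = E x f :=
  tendsto_nhds_unique ((BUCDecreasingTo.const hf).tendsto_cbExtension hE hf.inCb)
    tendsto_const_nhds

theorem cbExtension_le_apply (hf : InCb f) (hg : InBUC g) (hfg : ∀ y, f y ≤ g y) :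
    cbExtension E x f ≤ E x g := by
  simpa only [cbExtension, ciInf_const] using
    (lipSup_bucDecreasingTo hf).iInf_apply_le hE (x := x) (.const hg) hf.2 hfg

theorem cbExtension_mono (hf : InCb f) (hg : InCb g) (hfg : ∀ y, f y ≤ g y) :
    cbExtension E x f ≤ cbExtension E x g :=
  (lipSup_bucDecreasingTo hf).iInf_apply_le hE (lipSup_bucDecreasingTo hg) hf.2 hfg

theorem cbExtension_const (x : S) (c : ℝ) : cbExtension E x (fun _ => c) = c :=
  (cbExtension_eq hE (inBUC_const c)).trans (hE.apply_const x c)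

theorem isBddR_cbExtension (hf : InCb f) : IsBddR fun x => cbExtension E x f := by
  obtain ⟨C, hC⟩ := hf.2
  refine ⟨C, fun x => abs_le.2 ⟨?_, ?_⟩⟩
  · simpa only [cbExtension_const hE] using
      cbExtension_mono hE (x := x) (inBUC_const (-C)).inCb hf fun y => neg_le_of_abs_le (hC y)
  · simpa only [cbExtension_const hE] using
      cbExtension_mono hE (x := x) hf (inBUC_const C).inCb fun y => le_of_abs_le (hC y)

theorem bddAbove_range_apply_lipInf (hf : IsBddR f) :
    BddAbove (range fun n => E x (lipInf f n)) := by
  have ⟨C, hC⟩ := hf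
  exact bddAbove_range_apply hE (lipInf_inBUC hf) fun n y =>
    (lipInf_le hf n y).trans (le_of_abs_le (hC y))

/-- Convexity turns the approximation from above into one from below: `lipSup f n` is the midpoint
of `lipInf f n` and `2 lipSup f n - lipInf f n`, and the latter also decreases to `f`. -/
theorem cbExtension_eq_iSup (hf : InCb f) : cbExtension E x f = ⨆ n, E x (lipInf f n) := by
  have hlo := lipInf_inBUC hf.2
  have hsup := tendsto_atTop_ciSup (f := fun n => E x (lipInf f n))
    (fun n m hnm => hE.mono (hlo n) (hlo m) fun y => lipInf_monotone hf.2 y hnm)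
    (bddAbove_range_apply_lipInf hE hf.2)
  have hle : ⨆ n, E x (lipInf f n) ≤ cbExtension E x f := ciSup_le fun n =>
    (cbExtension_eq hE (hlo n)).symm.trans_le
      (cbExtension_mono hE (hlo n).inCb hf (lipInf_le hf.2 n))
  refine le_antisymm ?_ hle
  have hχ : BUCDecreasingTo (fun n y => 2 * lipSup f n y + 1 * lipSup (fun z => -f z) n y) f := by
    convert (lipSup_bucDecreasingTo hf).linearComb zero_le_two zero_le_one
      (lipSup_bucDecreasingTo hf.neg) using 1
    ring_nf
  have hmid : ∀ n, E x (lipSup f n) ≤ 1 / 2 * E x (lipInf f n) + (1 - 1 / 2) * E x (fun y =>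
      2 * lipSup f n y + 1 * lipSup (fun z => -f z) n y) := fun n => by
    convert hE.apply_convexComb (hlo n) (hχ.inBUC n) (t := 1 / 2) ⟨by norm_num, by norm_num⟩
      using 2
    funext y
    simp only [lipInf]
    ring
  have := le_of_tendsto_of_tendsto' ((lipSup_bucDecreasingTo hf).tendsto_cbExtension hE hf)
    ((hsup.const_mul _).add ((hχ.tendsto_cbExtension hE hf).const_mul _)) hmid
  linarith

theorem continuous_cbExtension (hf : InCb f) : Continuous fun x => cbExtension E x f := by
  have hlip := lipSup_bucDecreasingTo hf
  refine continuous_iff_lower_upperSemicontinuous.2 ⟨?_, ?_⟩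
  · simp_rw [cbExtension_eq_iSup hE hf]
    exact lowerSemicontinuous_ciSup (fun _ => bddAbove_range_apply_lipInf hE hf.2)
      fun n => (hE.inCb (lipInf_inBUC hf.2 n)).1.lowerSemicontinuous
  · exact upperSemicontinuous_ciInf (fun _ => hlip.bddBelow_range_apply hE hf.2)
      fun n => (hE.inCb (hlip.inBUC n)).1.upperSemicontinuous

theorem cbExtension_convexComb (hf : InCb f) (hg : InCb g) {t : ℝ} (ht : t ∈ Icc 0 1) :
    cbExtension E x (fun y => t * f y + (1 - t) * g y) ≤
      t * cbExtension E x f + (1 - t) * cbExtension E x g := by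
  have hf' := lipSup_bucDecreasingTo hf
  have hg' := lipSup_bucDecreasingTo hg
  refine le_of_tendsto_of_tendsto'
    ((hf'.linearComb ht.1 (sub_nonneg.2 ht.2) hg').tendsto_cbExtension hE (hf.linearComb _ _ hg))
    (((hf'.tendsto_cbExtension hE hf).const_mul t).add ((hg'.tendsto_cbExtension hE hg).const_mul _))
    fun n => hE.apply_convexComb (hf'.inBUC n) (hg'.inBUC n) ht

theorem tendsto_cbExtension_of_antitone {fn : ℕ → S → ℝ} (hfn : ∀ n, InCb (fn n)) (hf : InCb f)
    (hanti : ∀ y, Antitone fun n => fn n y)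
    (hlim : ∀ y, Tendsto (fun n => fn n y) atTop (𝓝 (f y))) :
    Tendsto (fun n => cbExtension E x (fn n)) atTop (𝓝 (cbExtension E x f)) := by
  have hψ := bucDecreasingTo_lipSup_diagonal hfn hanti hlim
  refine tendsto_of_tendsto_of_tendsto_of_le_of_le tendsto_const_nhds
    (hψ.tendsto_cbExtension hE hf) (fun n => cbExtension_mono hE hf (hfn n) ?_) fun n => ?_
  · exact fun y => (hanti y).le_of_tendsto (hlim y) n
  · obtain ⟨C, hC⟩ := (hfn n).2
    exact cbExtension_le_apply hE (hfn n) (hψ.inBUC n) (le_lipSup (fun y => le_of_abs_le (hC y)) n)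

theorem isConvexKernelOn_cbExtension : IsConvexKernelOn {f | InCb f} (cbExtension E) :=
  ⟨fun _ _ hf _ hg => cbExtension_mono hE hf hg, cbExtension_const hE,
    fun _ hf => ⟨continuous_cbExtension hE hf, isBddR_cbExtension hE hf⟩,
    fun _ _ hf _ hg _ => cbExtension_convexComb hE hf hg,
    fun _ _ _ hfn hf => tendsto_cbExtension_of_antitone hE hfn hf⟩

theorem eq_cbExtension {E' : S → (S → ℝ) → ℝ} (hE' : IsConvexKernelOn {f | InCb f} E')
    (hEE' : ∀ x f, InBUC f → E' x f = E x f) (hf : InCb f) : E' x f = cbExtension E x f := by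
  have hψ := lipSup_bucDecreasingTo hf
  refine tendsto_nhds_unique ?_ (hψ.tendsto_cbExtension hE hf)
  exact (hE'.tendsto_apply_of_antitone (fun n => (hψ.inBUC n).inCb) hf hψ.antitone
    hψ.tendsto).congr fun n => hEE' x _ (hψ.inBUC n)

end Extension

theorem stmt18_general {S : Type*} [MetricSpace S]
    (E : S → (S → ℝ) → ℝ)
    (hE : IsConvexKernelOn {f : S → ℝ | InBUC f} E) :
    ∃ Ehat : S → (S → ℝ) → ℝ,
      (IsConvexKernelOn {f : S → ℝ | InCb f} Ehat ∧
        ∀ (x : S) (f : S → ℝ), InBUC f → Ehat x f = E x f) ∧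
      -- uniqueness
      (∀ E' : S → (S → ℝ) → ℝ,
        IsConvexKernelOn {f : S → ℝ | InCb f} E' →
        (∀ (x : S) (f : S → ℝ), InBUC f → E' x f = E x f) →
        ∀ (x : S) (f : S → ℝ), InCb f → E' x f = Ehat x f) :=
  ⟨cbExtension E, ⟨isConvexKernelOn_cbExtension hE, fun _ _ hf => cbExtension_eq hE hf⟩,
    fun _ hE' hEE' _ _ hf => eq_cbExtension hE hE' hEE' hf⟩

theorem stmt18 {S : Type*} [MetricSpace S] [TopologicalSpace.SeparableSpace S]
    [CompleteSpace S]
    (E : S → (S → ℝ) → ℝ)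
    (hE : IsConvexKernelOn {f : S → ℝ | InBUC f} E) :
    ∃ Ehat : S → (S → ℝ) → ℝ,
      (IsConvexKernelOn {f : S → ℝ | InCb f} Ehat ∧
        ∀ (x : S) (f : S → ℝ), InBUC f → Ehat x f = E x f) ∧
      -- uniqueness
      (∀ E' : S → (S → ℝ) → ℝ,
        IsConvexKernelOn {f : S → ℝ | InCb f} E' →
        (∀ (x : S) (f : S → ℝ), InBUC f → E' x f = E x f) →
        ∀ (x : S) (f : S → ℝ), InCb f → E' x f = Ehat x f) :=
  stmt18_general E hE
end

section
/- Let S and T be Polish spaces and E a convex pre-kernel from C_b(S) to C_b(S) which is continuous from above. Then the parameter-dependent map E_T((x,y), f) := E(x, f(·,y)) for (x,y) ∈ S×T and f ∈ C_b(S×T) is a convex pre-kernel from C_b(S×T) to C_b(S×T) which is continuous from above; in particular, for each f ∈ C_b(S×T), the function (x,y) ↦ E(x, f(·,y)) is bounded and continuous on S×T. -/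
/-!
Everything except continuity of `(x, y) ↦ E(x, f(·, y))` is inherited slice by slice. For
continuity take `(xₘ, yₘ) → (x, y)`. The functions `gₙ(s) = sup {f(s, t) | t ∈ {y, yₙ, yₙ₊₁, …}}`
are bounded and continuous (a supremum over a compact set), dominate `f(·, yₘ)` for `m ≥ n` and
decrease pointwise to `f(·, y)`, so continuity from above and monotonicity of `E` give
`limsup E(xₘ, f(·, yₘ)) ≤ E(x, f(·, y))`. Applying this bound to `2 f(·, y) - f` and using
convexity with weight `1/2` gives the matching lower bound on the `liminf`.
-/

open Filter

open Set Topology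

lemma InCb.const {S : Type*} [TopologicalSpace S] (c : ℝ) : InCb fun _ : S => c :=
  ⟨continuous_const, |c|, fun _ => le_rfl⟩

lemma IsConvexKernelOn.abs_apply_le {S : Type*} [TopologicalSpace S] {E : S → (S → ℝ) → ℝ}
    (hE : IsConvexKernelOn {f | InCb f} E) {f : S → ℝ} (hf : InCb f) {C : ℝ}
    (hC : ∀ s, |f s| ≤ C) (x : S) : |E x f| ≤ C := by
  obtain ⟨hmono, hconst, -⟩ := hE
  have lower := hmono x _ (InCb.const (-C)) f hf fun s => (abs_le.1 (hC s)).1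
  have upper := hmono x f hf _ (InCb.const C) fun s => (abs_le.1 (hC s)).2
  rw [hconst] at lower upper
  exact abs_le.2 ⟨lower, upper⟩

section Envelopes

variable {S T : Type*} {f : S × T → ℝ}

def tailSet (y : ℕ → T) (y₀ : T) (n : ℕ) : Set T := insert y₀ (range fun m => y (m + n))

lemma mem_tailSet {y : ℕ → T} {y₀ : T} {n m : ℕ} (h : n ≤ m) : y m ∈ tailSet y y₀ n :=
  mem_insert_of_mem _ ⟨m - n, congrArg y (Nat.sub_add_cancel h)⟩

lemma self_mem_tailSet (y : ℕ → T) (y₀ : T) (n : ℕ) : y₀ ∈ tailSet y y₀ n := mem_insert _ _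

lemma tailSet_antitone (y : ℕ → T) (y₀ : T) : Antitone (tailSet y y₀) := fun n _ h =>
  insert_subset (self_mem_tailSet _ _ _) (range_subset_iff.2 fun _ => mem_tailSet (by omega))

noncomputable def sliceSup (f : S × T → ℝ) (K : Set T) (s : S) : ℝ :=
  sSup ((fun t => f (s, t)) '' K)

lemma bddAbove_slice_image (hf : IsBddR f) (s : S) (K : Set T) :
    BddAbove ((fun t => f (s, t)) '' K) := by
  obtain ⟨C, hC⟩ := hf
  exact ⟨C, forall_mem_image.2 fun t _ => (abs_le.1 (hC (s, t))).2⟩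

lemma le_sliceSup (hf : IsBddR f) {K : Set T} {s : S} {t : T} (ht : t ∈ K) :
    f (s, t) ≤ sliceSup f K s :=
  le_csSup (bddAbove_slice_image hf s K) (mem_image_of_mem _ ht)

lemma sliceSup_le {K : Set T} (hK : K.Nonempty) {s : S} {c : ℝ} (h : ∀ t ∈ K, f (s, t) ≤ c) :
    sliceSup f K s ≤ c :=
  csSup_le (hK.image _) (forall_mem_image.2 h)

lemma sliceSup_mono (hf : IsBddR f) {K L : Set T} (hK : K.Nonempty) (hKL : K ⊆ L) (s : S) :
    sliceSup f K s ≤ sliceSup f L s :=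
  csSup_le_csSup (bddAbove_slice_image hf s L) (hK.image _) (image_mono hKL)

end Envelopes

section Slices

variable {S T : Type*} [TopologicalSpace S] [TopologicalSpace T] {f : S × T → ℝ}

lemma InCb.slice (hf : InCb f) (y : T) : InCb fun s => f (s, y) :=
  ⟨hf.1.comp (.prodMk_left y), hf.2.imp fun _ hC s => hC (s, y)⟩

lemma isCompact_tailSet {y : ℕ → T} {y₀ : T} (hy : Tendsto y atTop (𝓝 y₀)) (n : ℕ) :
    IsCompact (tailSet y y₀ n) :=
  (hy.comp (tendsto_add_atTop_nat n)).isCompact_insert_range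

lemma InCb.sliceSup (hf : InCb f) {K : Set T} (hK : IsCompact K) (hne : K.Nonempty) :
    InCb (sliceSup f K) := by
  obtain ⟨t₀, ht₀⟩ := hne
  obtain ⟨C, hC⟩ := hf.2
  refine ⟨hK.continuous_sSup (f := fun s t => f (s, t)) hf.1, C, fun s => abs_le.2 ⟨?_, ?_⟩⟩
  · exact (abs_le.1 (hC (s, t₀))).1.trans (le_sliceSup hf.2 ht₀)
  · exact sliceSup_le ⟨t₀, ht₀⟩ fun t _ => (abs_le.1 (hC (s, t))).2

lemma tendsto_sliceSup_tailSet (hf : InCb f) {y : ℕ → T} {y₀ : T}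
    (hy : Tendsto y atTop (𝓝 y₀)) (s : S) :
    Tendsto (fun n => sliceSup f (tailSet y y₀ n) s) atTop (𝓝 (f (s, y₀))) := by
  have hfy : Tendsto (fun m => f (s, y m)) atTop (𝓝 (f (s, y₀))) :=
    ((hf.1.comp (.prodMk_right s)).tendsto y₀).comp hy
  refine tendsto_order.2 ⟨fun c hc => .of_forall fun n =>
    hc.trans_le (le_sliceSup hf.2 (self_mem_tailSet _ _ _)), fun c hc => ?_⟩
  obtain ⟨c', hc', hc'c⟩ := exists_between hc
  obtain ⟨N, hN⟩ := eventually_atTop.1 ((tendsto_order.1 hfy).2 c' hc')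
  refine eventually_atTop.2 ⟨N, fun n hn =>
    (sliceSup_le ⟨_, self_mem_tailSet _ _ _⟩ ?_).trans_lt hc'c⟩
  rintro t (rfl | ⟨m, rfl⟩)
  · exact hc'.le
  · exact (hN _ (by omega)).le

variable {E : S → (S → ℝ) → ℝ}

lemma IsConvexKernelOn.eventually_lt_of_tendsto (hE : IsConvexKernelOn {f | InCb f} E)
    (hf : InCb f) {u : ℕ → S × T} {q : S × T} (hu : Tendsto u atTop (𝓝 q)) {c : ℝ}
    (hc : E q.1 (fun s => f (s, q.2)) < c) :
    ∀ᶠ m in atTop, E (u m).1 (fun s => f (s, (u m).2)) < c := by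
  obtain ⟨hmono, -, hcont, -, habove⟩ := hE
  have hx : Tendsto (fun m => (u m).1) atTop (𝓝 q.1) := (continuous_fst.tendsto q).comp hu
  have hy : Tendsto (fun m => (u m).2) atTop (𝓝 q.2) := (continuous_snd.tendsto q).comp hu
  set g := fun n => sliceSup f (tailSet (fun m => (u m).2) q.2 n)
  have hg : ∀ n, InCb (g n) := fun n =>
    hf.sliceSup (isCompact_tailSet hy n) ⟨_, self_mem_tailSet _ _ _⟩
  have hEg : Tendsto (fun n => E q.1 (g n)) atTop (𝓝 (E q.1 fun s => f (s, q.2))) :=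
    habove q.1 g _ hg (hf.slice q.2)
      (fun s _ _ h => sliceSup_mono hf.2 ⟨_, self_mem_tailSet _ _ _⟩ (tailSet_antitone _ _ h) s)
      (tendsto_sliceSup_tailSet hf hy)
  obtain ⟨n, hn⟩ := ((tendsto_order.1 hEg).2 c hc).exists
  filter_upwards [(tendsto_order.1 (((hcont _ (hg n)).1.tendsto q.1).comp hx)).2 c hn,
    eventually_ge_atTop n] with m hm hnm
  exact (hmono _ _ (hf.slice _) _ (hg n) fun _ => le_sliceSup hf.2 (mem_tailSet hnm)).trans_lt hm

lemma IsConvexKernelOn.eventually_gt_of_tendsto (hE : IsConvexKernelOn {f | InCb f} E)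
    (hf : InCb f) {u : ℕ → S × T} {q : S × T} (hu : Tendsto u atTop (𝓝 q)) {c : ℝ}
    (hc : c < E q.1 (fun s => f (s, q.2))) :
    ∀ᶠ m in atTop, c < E (u m).1 (fun s => f (s, (u m).2)) := by
  have ⟨_, _, hcont, hconv, _⟩ := hE
  set L := E q.1 fun s => f (s, q.2)
  set h : S × T → ℝ := fun p => 2 * f (p.1, q.2) - f p
  have hh : InCb h := by
    obtain ⟨hfc, C, hC⟩ := hf
    refine ⟨(continuous_const.mul (hfc.comp (continuous_fst.prodMk continuous_const))).sub hfc,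
      3 * C, fun p => ?_⟩
    have h₁ := abs_le.1 (hC (p.1, q.2))
    have h₂ := abs_le.1 (hC p)
    rw [abs_le]
    constructor <;> linarith
  have hh_slice : (fun s => h (s, q.2)) = fun s => f (s, q.2) := by
    funext s
    simp only [h]
    ring
  have hmid : ∀ x y, E x (fun s => f (s, q.2)) ≤
      1 / 2 * E x (fun s => f (s, y)) + (1 - 1 / 2) * E x (fun s => h (s, y)) := by
    intro x y
    convert hconv x _ (hf.slice y) _ (hh.slice y) (1 / 2) ⟨by norm_num, by norm_num⟩ using 2
    funext s
    simp only [h]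
    ring
  have hEx : Tendsto (fun m => E (u m).1 (fun s => f (s, q.2))) atTop (𝓝 L) :=
    ((hcont _ (hf.slice q.2)).1.tendsto q.1).comp ((continuous_fst.tendsto q).comp hu)
  filter_upwards [(tendsto_order.1 hEx).1 (L - (L - c) / 3) (by linarith),
    hE.eventually_lt_of_tendsto hh hu (c := L + (L - c) / 3) (by rw [hh_slice]; linarith)]
    with m h₁ h₂
  linarith [hmid (u m).1 (u m).2]

lemma IsConvexKernelOn.continuous_slice [FirstCountableTopology S] [FirstCountableTopology T]
    (hE : IsConvexKernelOn {f | InCb f} E) (hf : InCb f) :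
    Continuous fun p : S × T => E p.1 (fun s => f (s, p.2)) :=
  continuous_iff_seqContinuous.2 fun _ _ hu => tendsto_order.2
    ⟨fun _ hc => hE.eventually_gt_of_tendsto hf hu hc,
      fun _ hc => hE.eventually_lt_of_tendsto hf hu hc⟩

end Slices

theorem stmt19_general {S T : Type*}
    [MetricSpace S]
    [MetricSpace T]
    (E : S → (S → ℝ) → ℝ)
    (hE : IsConvexKernelOn {f : S → ℝ | InCb f} E) :
    -- the parameter dependent version `E_T((x,y),f) = E(x, f(·,y))` is a convex
    -- pre-kernel from `C_b(S×T)` to `C_b(S×T)` continuous from above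
    IsConvexKernelOn {f : S × T → ℝ | InCb f}
      (fun (p : S × T) (f : S × T → ℝ) => E p.1 (fun s => f (s, p.2))) := by
  have ⟨hmono, hconst, _, hconv, habove⟩ := hE
  refine ⟨fun p f hf g hg hfg =>
      hmono p.1 _ (hf.slice p.2) _ (hg.slice p.2) fun s => hfg (s, p.2),
    fun p c => hconst p.1 c, fun f hf => ⟨hE.continuous_slice hf, ?_⟩,
    fun p f hf g hg t ht => hconv p.1 _ (hf.slice p.2) _ (hg.slice p.2) t ht,
    fun p fn f hfn hf hanti hlim => habove p.1 (fun n s => fn n (s, p.2)) _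
      (fun n => (hfn n).slice p.2) (hf.slice p.2) (fun s _ _ h => hanti (s, p.2) h)
      (fun s => hlim (s, p.2))⟩
  obtain ⟨C, hC⟩ := hf.2
  exact ⟨C, fun p => hE.abs_apply_le (hf.slice p.2) (fun s => hC (s, p.2)) p.1⟩

theorem stmt19 {S T : Type*}
    [MetricSpace S] [TopologicalSpace.SeparableSpace S] [CompleteSpace S]
    [MetricSpace T] [TopologicalSpace.SeparableSpace T] [CompleteSpace T]
    (E : S → (S → ℝ) → ℝ)
    (hE : IsConvexKernelOn {f : S → ℝ | InCb f} E) :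
    -- the parameter dependent version `E_T((x,y),f) = E(x, f(·,y))` is a convex
    -- pre-kernel from `C_b(S×T)` to `C_b(S×T)` continuous from above
    IsConvexKernelOn {f : S × T → ℝ | InCb f}
      (fun (p : S × T) (f : S × T → ℝ) => E p.1 (fun s => f (s, p.2))) :=
  stmt19_general E hE
end
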